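/- arXiv:cond-mat/0607749 — 2 statements merged into one kernel-verified Lean document; each statement's English description precedes it below -/
import Mathlib

section
/- For every μ ∈ ℰ(A), 𝒮_α^{xy} (𝒢_{xy}^α μ) = μ; i.e., the induced map 𝒮 on ergodic measures inverts the induced map 𝒢. -/
open MeasureTheory Filter Topology

instance optionMeasurableSpace {A : Type*} [MeasurableSpace A] : MeasurableSpace (Option A) :=
  MeasurableSpace.comap (Option.elim' (Sum.inr ()) Sum.inl : Option A → A ⊕ Unit) inferInstance

/-- Left-to-right non-overlapping substitution of the pair `x y` by a new symbol `none`. -/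
def pairSubst {A : Type*} [DecidableEq A] (x y : A) : List A → List (Option A)
  | [] => []
  | [a] => [some a]
  | a :: b :: l =>
      if a = x ∧ b = y then none :: pairSubst x y l
      else some a :: pairSubst x y (b :: l)

/-- Substitution of every occurrence of `none` by the pair `x y`. -/
def pairExpand {A : Type*} (x y : A) : List (Option A) → List A
  | [] => []
  | none :: l => x :: y :: pairExpand x y l
  | some a :: l => a :: pairExpand x y l

/-- Number of (possibly overlapping) occurrences of `s` as a contiguous subword of `r`. -/
def occ {B : Type*} [DecidableEq B] (s r : List B) : ℕ :=
  (List.range r.length).countP (fun i => decide (s <+: r.drop i))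

/-- The word `w₁ … wₙ` read out of a two-sided sequence. -/
def wordOf {B : Type*} (w : ℤ → B) (n : ℕ) : List B :=
  (List.range n).map (fun i => w (i : ℤ))

/-- The cylinder set determined by a word. -/
def cyl {B : Type*} (s : List B) : Set (ℤ → B) :=
  {x | ∀ i : Fin s.length, x ((i : ℕ) : ℤ) = s.get i}

/-- The shift map on two-sided sequences. -/
def shift {B : Type*} : (ℤ → B) → (ℤ → B) := fun x i => x (i + 1)

/-- The `n`-block entropy of a measure on `B^ℤ` (base-2 logarithms). -/
noncomputable def blockH {B : Type*} [Fintype B] [MeasurableSpace B]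
    (μ : Measure (ℤ → B)) (n : ℕ) : ℝ :=
  -∑ z : Fin n → B,
    (μ {x : ℤ → B | ∀ i : Fin n, x ((i : ℕ) : ℤ) = z i}).toReal *
      Real.logb 2 ((μ {x : ℤ → B | ∀ i : Fin n, x ((i : ℕ) : ℤ) = z i}).toReal)

/-- `k`-Markov property (stated with cross-multiplied conditional probabilities). -/
def IsKMarkov {B : Type*} [MeasurableSpace B] (μ : Measure (ℤ → B)) (k : ℕ) : Prop :=
  ∀ w : List B, k ≤ w.length → μ (cyl w) ≠ 0 → ∀ a : B,
    μ (cyl (w ++ [a])) * μ (cyl (w.drop (w.length - k))) =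
      μ (cyl (w.drop (w.length - k) ++ [a])) * μ (cyl w)


set_option linter.unusedSectionVars false

section Comb

variable {A : Type*} [DecidableEq A] (x y : A)

theorem pairExpand_pairSubst : ∀ l : List A, pairExpand x y (pairSubst x y l) = l := by
  intro l
  induction l using pairSubst.induct x y with
  | case1 => rfl
  | case2 a => rfl
  | case3 a b l h ih => simp [pairSubst, h, pairExpand, ih]
  | case4 a b l h ih => simp [pairSubst, h, pairExpand, ih]

theorem length_pairExpand : ∀ l : List (Option A),
    (pairExpand x y l).length = l.length + l.count none
  | [] => rfl
  | none :: l => by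
      simp [pairExpand, length_pairExpand l, List.count_cons]; ring
  | some a :: l => by
      simp [pairExpand, length_pairExpand l, List.count_cons]; ring

theorem length_le_length_pairExpand (l : List (Option A)) :
    l.length ≤ (pairExpand x y l).length := by
  rw [length_pairExpand]; omega

theorem length_le_two_mul_pairSubst : ∀ l : List A,
    l.length ≤ 2 * (pairSubst x y l).length := by
  intro l
  induction l using pairSubst.induct x y with
  | case1 => simp [pairSubst]
  | case2 a => simp [pairSubst]
  | case3 a b l h ih => simp only [pairSubst, if_pos h]; simp at ih ⊢; omega
  | case4 a b l h ih => simp only [pairSubst, if_neg h]; simp at ih ⊢; omega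

omit [DecidableEq A] in
theorem pairExpand_append (l₁ l₂ : List (Option A)) :
    pairExpand x y (l₁ ++ l₂) = pairExpand x y l₁ ++ pairExpand x y l₂ := by
  induction l₁ with
  | nil => rfl
  | cons c l ih => cases c <;> simp [pairExpand, ih]

omit [DecidableEq A] in
theorem pairExpand_take_prefix (k : ℕ) (l : List (Option A)) :
    pairExpand x y (l.take k) <+: pairExpand x y l := by
  conv_rhs => rw [← List.take_append_drop k l]
  rw [pairExpand_append]
  exact List.prefix_append _ _

end Comb

section Occ

variable {B : Type*} [DecidableEq B]

theorem occ_nil (s : List B) : occ s [] = 0 := rfl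

theorem occ_cons (s : List B) (c : B) (l : List B) :
    occ s (c :: l) = (if s <+: c :: l then 1 else 0) + occ s l := by
  simp only [occ, List.length_cons, List.range_succ_eq_map, List.countP_cons, List.countP_map]
  simp only [List.drop_succ_cons, Function.comp_def, List.drop_zero]
  rw [← occ, Nat.add_comm]
  simp

theorem occ_le_length (s l : List B) : occ s l ≤ l.length := by
  simpa [occ] using List.countP_le_length (l := List.range l.length)
    (p := fun i => decide (s <+: l.drop i))

theorem occ_singleton (c : B) (l : List B) : occ [c] l = l.count c := by
  induction l with
  | nil => rfl
  | cons d l ih =>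
      rw [occ_cons, ih, List.count_cons]
      have : [c] <+: d :: l ↔ d = c := by
        constructor
        · rintro ⟨t, ht⟩; simp at ht; exact ht.1.symm
        · rintro rfl; exact ⟨l, rfl⟩
      simp [this]; split <;> simp_all [Nat.add_comm]

theorem countP_range_eq_sum (n : ℕ) (p : ℕ → Bool) :
    (List.range n).countP p = ∑ i ∈ Finset.range n, if p i then 1 else 0 := by
  induction n with
  | zero => rfl
  | succ n ih =>
      rw [List.range_succ, List.countP_append, Finset.sum_range_succ, ih]
      simp [List.countP_cons]

theorem occ_eq_sum (s l : List B) :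
    occ s l = ∑ i ∈ Finset.range l.length, if s <+: l.drop i then 1 else 0 := by
  rw [occ, countP_range_eq_sum]
  simp

omit [DecidableEq B] in
theorem prefix_iff_of_prefix (r u v : List B) (h : u <+: v) (hlen : r.length ≤ u.length) :
    r <+: v ↔ r <+: u := by
  constructor
  · intro hrv
    exact List.prefix_of_prefix_length_le hrv h hlen
  · intro hru
    exact hru.trans h

omit [DecidableEq B] in
theorem prefix_iff_take_eq (t u : List B) :
    t <+: u ↔ u.take t.length = t := by
  constructor
  · intro h
    rw [List.prefix_iff_eq_take] at h
    exact h.symm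
  · intro h
    rw [← h]
    exact List.take_prefix _ _

end Occ
section Key

variable {A : Type*} [DecidableEq A] (x y : A)

/-- Number of occurrences of `r` in the expansion of `t` that start inside the
expansion of the first letter of `t`. -/
def gg (r : List A) (t : List (Option A)) : ℕ :=
  (if r <+: pairExpand x y t then 1 else 0) +
  (if t.head? = some none then (if r <+: (pairExpand x y t).drop 1 then 1 else 0) else 0)

theorem gg_le_two (r : List A) (t : List (Option A)) : gg x y r t ≤ 2 := by
  unfold gg
  split_ifs <;> omega

theorem length_pos_of_ne_nil {r : List A} (hr : r ≠ []) : 0 < r.length :=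
  List.length_pos_iff.mpr hr

theorem gg_take_some (r : List A) (hr : r ≠ []) (a : A) (l : List (Option A)) :
    gg x y r ((some a :: l).take r.length) = if r <+: a :: pairExpand x y l then 1 else 0 := by
  have hm : 0 < r.length := length_pos_of_ne_nil hr
  obtain ⟨m, hm'⟩ : ∃ m, r.length = m + 1 := ⟨r.length - 1, by omega⟩
  rw [hm', List.take_succ_cons]
  unfold gg
  simp only [List.head?_cons, pairExpand]
  have hiff : r <+: a :: pairExpand x y (l.take m) ↔ r <+: a :: pairExpand x y l := by
    by_cases hl : l.length ≤ m
    · rw [List.take_of_length_le hl]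
    · symm
      apply prefix_iff_of_prefix
      · rw [List.cons_prefix_cons]
        exact ⟨rfl, pairExpand_take_prefix x y m l⟩
      · have h1 := length_le_length_pairExpand x y (l.take m)
        have h2 : (l.take m).length = m := by
          rw [List.length_take]; omega
        simp only [List.length_cons]
        omega
  simp [hiff]

theorem gg_take_none (r : List A) (hr : r ≠ []) (l : List (Option A)) :
    gg x y r ((none :: l).take r.length) =
      (if r <+: x :: y :: pairExpand x y l then 1 else 0) +
      (if r <+: y :: pairExpand x y l then 1 else 0) := by
  have hm : 0 < r.length := length_pos_of_ne_nil hr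
  obtain ⟨m, hm'⟩ : ∃ m, r.length = m + 1 := ⟨r.length - 1, by omega⟩
  rw [hm', List.take_succ_cons]
  unfold gg
  simp only [List.head?_cons, pairExpand, List.drop_succ_cons, List.drop_zero]
  by_cases hl : l.length ≤ m
  · rw [List.take_of_length_le hl]
    simp
    exact if_congr Iff.rfl rfl rfl
  · have h1 := length_le_length_pairExpand x y (l.take m)
    have h2 : (l.take m).length = m := by rw [List.length_take]; omega
    have hiff1 : r <+: x :: y :: pairExpand x y (l.take m) ↔ r <+: x :: y :: pairExpand x y l := by
      symm
      apply prefix_iff_of_prefix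
      · rw [List.cons_prefix_cons]
        refine ⟨rfl, ?_⟩
        rw [List.cons_prefix_cons]
        exact ⟨rfl, pairExpand_take_prefix x y m l⟩
      · simp only [List.length_cons]; omega
    have hiff2 : r <+: y :: pairExpand x y (l.take m) ↔ r <+: y :: pairExpand x y l := by
      symm
      apply prefix_iff_of_prefix
      · rw [List.cons_prefix_cons]
        exact ⟨rfl, pairExpand_take_prefix x y m l⟩
      · simp only [List.length_cons]; omega
    simp [hiff1, hiff2]

theorem occ_pairExpand_eq (r : List A) (hr : r ≠ []) :
    ∀ l : List (Option A),
      occ r (pairExpand x y l) =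
        ∑ i ∈ Finset.range l.length, gg x y r ((l.drop i).take r.length) := by
  intro l
  induction l with
  | nil => simp [pairExpand, occ_nil]
  | cons c l ih =>
      rw [List.length_cons, Finset.sum_range_succ']
      simp only [List.drop_succ_cons, List.drop_zero]
      rw [← ih]
      cases c with
      | some a =>
          show occ r (a :: pairExpand x y l) = _
          rw [occ_cons, gg_take_some x y r hr]
          omega
      | none =>
          show occ r (x :: y :: pairExpand x y l) = _
          rw [occ_cons, occ_cons, gg_take_none x y r hr]
          omega

end Key
section Bounds

variable {A : Type*} [DecidableEq A] [Fintype A] (x y : A)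

theorem sum_gg_occ_eq (r : List A) (l : List (Option A)) :
    ∑ f : Fin r.length → Option A, gg x y r (List.ofFn f) * occ (List.ofFn f) l =
      ∑ i ∈ Finset.range l.length,
        if i + r.length ≤ l.length then gg x y r ((l.drop i).take r.length) else 0 := by
  classical
  have step1 : ∀ f : Fin r.length → Option A,
      gg x y r (List.ofFn f) * occ (List.ofFn f) l =
        ∑ i ∈ Finset.range l.length,
          (if List.ofFn f <+: l.drop i then gg x y r (List.ofFn f) else 0) := by
    intro f
    rw [occ_eq_sum, Finset.mul_sum]
    exact Finset.sum_congr rfl fun i _ => by split <;> simp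
  rw [Finset.sum_congr rfl fun f _ => step1 f, Finset.sum_comm]
  refine Finset.sum_congr rfl fun i hi => ?_
  simp only [Finset.mem_range] at hi
  by_cases h : i + r.length ≤ l.length
  · rw [if_pos h]
    have hlen : ((l.drop i).take r.length).length = r.length := by
      rw [List.length_take, List.length_drop]; omega
    obtain ⟨f₀, hf₀⟩ : ∃ f₀ : Fin r.length → Option A,
        List.ofFn f₀ = (l.drop i).take r.length := by
      refine ⟨fun j => ((l.drop i).take r.length).get (Fin.cast hlen.symm j), ?_⟩
      apply List.ext_get (by simpa using hlen)
      intro k h1 h2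
      simp
    rw [Finset.sum_eq_single f₀]
    · rw [hf₀, if_pos (List.take_prefix _ _)]
    · intro f _ hne
      rw [if_neg]
      intro hpref
      apply hne
      have h1 : (l.drop i).take (List.ofFn f).length = List.ofFn f :=
        (prefix_iff_take_eq _ _).mp hpref
      have h2 : List.ofFn f = List.ofFn f₀ := by
        rw [hf₀]
        rw [← h1]
        simp
      exact List.ofFn_inj.mp h2
    · intro hmem
      exact absurd (Finset.mem_univ f₀) hmem
  · rw [if_neg h]
    apply Finset.sum_eq_zero
    intro f _
    rw [if_neg]
    intro hpref
    have := hpref.length_le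
    simp only [List.length_ofFn, List.length_drop] at this
    omega

theorem sum_gg_le_occ_pairExpand (r : List A) (hr : r ≠ []) (l : List (Option A)) :
    ∑ f : Fin r.length → Option A, gg x y r (List.ofFn f) * occ (List.ofFn f) l ≤
      occ r (pairExpand x y l) := by
  rw [occ_pairExpand_eq x y r hr, sum_gg_occ_eq]
  exact Finset.sum_le_sum fun i _ => by split <;> simp

theorem occ_pairExpand_le_sum_gg (r : List A) (hr : r ≠ []) (l : List (Option A)) :
    occ r (pairExpand x y l) ≤
      (∑ f : Fin r.length → Option A, gg x y r (List.ofFn f) * occ (List.ofFn f) l) +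
        2 * r.length := by
  classical
  rw [occ_pairExpand_eq x y r hr, sum_gg_occ_eq]
  have hsplit : ∀ i ∈ Finset.range l.length,
      gg x y r ((l.drop i).take r.length) ≤
        (if i + r.length ≤ l.length then gg x y r ((l.drop i).take r.length) else 0) +
          (if i + r.length ≤ l.length then 0 else 2) := by
    intro i _
    split
    · simp
    · simpa using gg_le_two x y r _
  calc ∑ i ∈ Finset.range l.length, gg x y r ((l.drop i).take r.length)
      ≤ ∑ i ∈ Finset.range l.length,
          ((if i + r.length ≤ l.length then gg x y r ((l.drop i).take r.length) else 0) +
            (if i + r.length ≤ l.length then 0 else 2)) := Finset.sum_le_sum hsplit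
    _ = (∑ i ∈ Finset.range l.length,
          (if i + r.length ≤ l.length then gg x y r ((l.drop i).take r.length) else 0)) +
        ∑ i ∈ Finset.range l.length, (if i + r.length ≤ l.length then 0 else 2) :=
          Finset.sum_add_distrib
    _ ≤ _ := by
        gcongr
        have hsub : (Finset.range l.length).filter (fun i => ¬ (i + r.length ≤ l.length)) ⊆
            Finset.Ico (l.length - r.length) l.length := by
          intro i hi
          simp only [Finset.mem_filter, Finset.mem_range, not_le] at hi
          simp only [Finset.mem_Ico]
          omega
        calc ∑ i ∈ Finset.range l.length, (if i + r.length ≤ l.length then 0 else 2)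
            = ∑ i ∈ (Finset.range l.length).filter (fun i => ¬ (i + r.length ≤ l.length)), 2 := by
              rw [Finset.sum_filter]
              exact Finset.sum_congr rfl fun i _ => by split <;> simp_all
          _ ≤ ∑ _i ∈ Finset.Ico (l.length - r.length) l.length, 2 :=
              Finset.sum_le_sum_of_subset hsub
          _ ≤ 2 * r.length := by
              rw [Finset.sum_const, Nat.card_Ico, smul_eq_mul]
              omega

end Bounds
section Meas

open Function

instance optionMSC {A : Type*} [MeasurableSpace A] [MeasurableSingletonClass A] :
    MeasurableSingletonClass (Option A) := by
  constructor
  intro o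
  show MeasurableSet[MeasurableSpace.comap
    (Option.elim' (Sum.inr ()) Sum.inl : Option A → A ⊕ Unit) inferInstance] {o}
  rw [MeasurableSpace.measurableSet_comap]
  cases o with
  | none =>
      refine ⟨Set.range Sum.inr, measurableSet_range_inr, ?_⟩
      ext o; cases o <;> simp [Option.elim']
  | some a =>
      refine ⟨Sum.inl '' {a}, (MeasurableSet.singleton a).inl_image, ?_⟩
      ext o; cases o <;> simp [Option.elim']

theorem shift_iterate {B : Type*} : ∀ (k : ℕ) (w : ℤ → B) (i : ℤ), shift^[k] w i = w (i + k)
  | 0, w, i => by simp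
  | (k+1), w, i => by
      rw [Function.iterate_succ_apply, shift_iterate k (shift w) i]
      show w (i + k + 1) = _
      congr 1
      push_cast
      ring

theorem measurable_shift {B : Type*} [MeasurableSpace B] :
    Measurable (shift : (ℤ → B) → (ℤ → B)) :=
  measurable_pi_lambda _ fun i => measurable_pi_apply (i + 1)

theorem measurableSet_cyl {B : Type*} [MeasurableSpace B] [MeasurableSingletonClass B]
    (s : List B) : MeasurableSet (cyl s) := by
  have : cyl s = ⋂ i : Fin s.length, (fun w : ℤ → B => w ((i : ℕ) : ℤ)) ⁻¹' {s.get i} := by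
    ext w; simp [cyl]
  rw [this]
  exact MeasurableSet.iInter fun i =>
    (measurable_pi_apply _) (MeasurableSet.singleton _)

theorem wordOf_eq {B : Type*} (z : ℤ → B) (n : ℕ) :
    wordOf z n = List.map (fun i : ℕ => z (i : ℤ)) (List.range n) := by
  rw [wordOf]
  induction n with
  | zero => rfl
  | succ n ih => rw [List.range_succ]; simp_all [List.range_succ]

theorem length_wordOf {B : Type*} (z : ℤ → B) (n : ℕ) : (wordOf z n).length = n := by
  rw [wordOf_eq, List.length_map, List.length_range]

theorem getElem_wordOf {B : Type*} (z : ℤ → B) (n k : ℕ) (h : k < (wordOf z n).length) :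
    (wordOf z n)[k] = z k := by
  have h' : k < n := by rwa [length_wordOf] at h
  rw [List.getElem_of_eq (wordOf_eq z n) h, List.getElem_map]
  congr 1
  rw [List.getElem_range]

theorem wordOf_eq_ofFn {B : Type*} (z : ℤ → B) (n : ℕ) :
    wordOf z n = List.ofFn (fun i : Fin n => z (i : ℕ)) := by
  apply List.ext_getElem
  · rw [length_wordOf, List.length_ofFn]
  · intro k h1 h2
    rw [getElem_wordOf, List.getElem_ofFn]

theorem measurable_word_fun {B : Type*} [MeasurableSpace B] [MeasurableSingletonClass B]
    [Finite B] {C : Type*} [MeasurableSpace C] (n : ℕ) (Φ : List B → C) :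
    Measurable (fun z : ℤ → B => Φ (wordOf z n)) := by
  have heq : (fun z : ℤ → B => Φ (wordOf z n)) =
      (fun g : Fin n → B => Φ (List.ofFn g)) ∘ (fun z (i : Fin n) => z (i : ℕ)) := by
    funext z
    simp only [Function.comp_apply]
    rw [wordOf_eq_ofFn]
  rw [heq]
  exact Measurable.of_discrete.comp (measurable_pi_lambda _ fun i => measurable_pi_apply _)

theorem integrable_word_fun {B : Type*} [MeasurableSpace B] [MeasurableSingletonClass B]
    [Finite B] (κ : MeasureTheory.Measure (ℤ → B)) [MeasureTheory.IsProbabilityMeasure κ]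
    (n : ℕ) (Φ : List B → ℝ) (C : ℝ) (hC : ∀ z, |Φ (wordOf z n)| ≤ C) :
    MeasureTheory.Integrable (fun z : ℤ → B => Φ (wordOf z n)) κ :=
  ⟨(measurable_word_fun n Φ).aestronglyMeasurable,
    MeasureTheory.HasFiniteIntegral.of_bounded (C := C) (Filter.Eventually.of_forall
      fun z => by simpa using hC z)⟩

theorem prefix_drop_wordOf {B : Type*} [DecidableEq B] (t : List B) (ht : t ≠ [])
    (z : ℤ → B) (n i : ℕ) :
    t <+: (wordOf z n).drop i ↔ (i + t.length ≤ n ∧ shift^[i] z ∈ cyl t) := by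
  have htpos : 0 < t.length := List.length_pos_iff.mpr ht
  have hlenw : (wordOf z n).length = n := length_wordOf z n
  constructor
  · intro h
    have hlen := h.length_le
    rw [List.length_drop, hlenw] at hlen
    have hin : i + t.length ≤ n := by omega
    refine ⟨hin, ?_⟩
    intro q
    have hdrop : ((wordOf z n).drop i)[(q : ℕ)]'(by rw [List.length_drop, hlenw]; omega)
        = z ((i + (q : ℕ) : ℕ) : ℤ) := by
      rw [← List.getElem_drop' (xs := wordOf z n) (by rw [hlenw]; omega)]
      exact getElem_wordOf z n _ _
    have hpeq := h.getElem q.isLt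
    rw [hdrop] at hpeq
    rw [shift_iterate, List.get_eq_getElem, hpeq]
    congr 1
    push_cast
    ring
  · rintro ⟨hin, hcyl⟩
    rw [prefix_iff_take_eq]
    apply List.ext_getElem
    · rw [List.length_take, List.length_drop, hlenw]; omega
    · intro k h1 h2
      have hcylk := hcyl ⟨k, h2⟩
      rw [shift_iterate] at hcylk
      rw [List.getElem_take, ← List.getElem_drop' (xs := wordOf z n) (i := i) (j := k)
        (by rw [hlenw]; omega), getElem_wordOf]
      rw [show t[k] = t.get ⟨k, h2⟩ from rfl, ← hcylk]
      congr 1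
      push_cast
      ring

end Meas
section Anal

open Filter Topology MeasureTheory

theorem integral_occ_wordOf {B : Type*} [DecidableEq B] [MeasurableSpace B]
    [MeasurableSingletonClass B] [Finite B]
    (κ : Measure (ℤ → B)) [IsProbabilityMeasure κ] (hκ : MeasurePreserving shift κ κ)
    (t : List B) (ht : t ≠ []) (n : ℕ) (hn : t.length ≤ n) :
    ∫ z, (occ t (wordOf z n) : ℝ) ∂κ =
      ((n - t.length + 1 : ℕ) : ℝ) * (κ (cyl t)).toReal := by
  have htpos : 0 < t.length := List.length_pos_iff.mpr ht
  have hSmeas : ∀ i : ℕ, MeasurableSet (shift^[i] ⁻¹' cyl t) := fun i =>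
    (measurable_shift.iterate i) (measurableSet_cyl t)
  have hsub : Finset.range (n - t.length + 1) ⊆ Finset.range n :=
    Finset.range_subset_range.mpr (by omega)
  classical
  have point : ∀ z : ℤ → B, (occ t (wordOf z n) : ℝ) =
      ∑ i ∈ Finset.range (n - t.length + 1),
        Set.indicator (shift^[i] ⁻¹' cyl t) (fun _ => (1:ℝ)) z := by
    intro z
    rw [occ_eq_sum, length_wordOf]
    push_cast
    have e1 : ∑ i ∈ Finset.range n, (if t <+: (wordOf z n).drop i then (1:ℝ) else 0) =
        ∑ i ∈ Finset.range (n - t.length + 1),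
          (if t <+: (wordOf z n).drop i then (1:ℝ) else 0) := by
      symm
      apply Finset.sum_subset hsub
      intro i hi hnot
      simp only [Finset.mem_range] at hi hnot
      rw [if_neg]
      intro hp
      have := ((prefix_drop_wordOf t ht z n i).mp hp).1
      omega
    rw [e1]
    refine Finset.sum_congr rfl fun i hi => ?_
    simp only [Finset.mem_range] at hi
    have hcle : i + t.length ≤ n := by omega
    have hiff := prefix_drop_wordOf t ht z n i
    rw [Set.indicator_apply]
    by_cases hzmem : shift^[i] z ∈ cyl t
    · rw [if_pos (hiff.mpr ⟨hcle, hzmem⟩), if_pos (Set.mem_preimage.mpr hzmem)]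
    · rw [if_neg (fun hp => hzmem (hiff.mp hp).2),
        if_neg (fun hp => hzmem (Set.mem_preimage.mp hp))]
  rw [MeasureTheory.integral_congr_ae (Filter.Eventually.of_forall point)]
  rw [MeasureTheory.integral_finset_sum _ fun i _ =>
    (MeasureTheory.integrable_const (1:ℝ)).indicator (hSmeas i)]
  have hterm : ∀ i ∈ Finset.range (n - t.length + 1),
      ∫ z, Set.indicator (shift^[i] ⁻¹' cyl t) (fun _ => (1:ℝ)) z ∂κ = (κ (cyl t)).toReal := by
    intro i _
    rw [MeasureTheory.integral_indicator_const (1:ℝ) (hSmeas i)]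
    rw [measureReal_def, (hκ.iterate i).measure_preimage (measurableSet_cyl t).nullMeasurableSet]
    simp
  rw [Finset.sum_congr rfl hterm, Finset.sum_const, Finset.card_range, nsmul_eq_mul]

theorem length_pairExpand_occ {A : Type*} [DecidableEq A] (x y : A)
    (l : List (Option A)) :
    (pairExpand x y l).length = l.length + occ [none] l := by
  induction l with
  | nil => rfl
  | cons c l ih =>
      rw [occ_cons]
      cases c with
      | none =>
          have hp : [none] <+: (none : Option A) :: l := ⟨l, rfl⟩
          show (pairExpand x y l).length + 2 = _
          rw [if_pos hp]
          simp only [List.length_cons]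
          omega
      | some a =>
          have hp : ¬ ([none] <+: (some a : Option A) :: l) := by
            rintro ⟨u, hu⟩
            simp at hu
          show (pairExpand x y l).length + 1 = _
          rw [if_neg hp]
          simp only [List.length_cons]
          omega

theorem tendsto_occ_ratio {A : Type*} [DecidableEq A] [Fintype A] (x y : A)
    (r : List A) (hr : r ≠ [])
    (l : ℕ → List (Option A))
    (hlen : Tendsto (fun n => (l n).length) atTop atTop)
    (c : (Fin r.length → Option A) → ℝ) (c0 : ℝ) (hc0 : 0 ≤ c0)
    (hc : ∀ f : Fin r.length → Option A,
      Tendsto (fun n => (occ (List.ofFn f) (l n) : ℝ) / ((l n).length : ℝ)) atTop (𝓝 (c f)))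
    (h0 : Tendsto (fun n => (occ [none] (l n) : ℝ) / ((l n).length : ℝ)) atTop (𝓝 c0)) :
    Tendsto (fun n => (occ r (pairExpand x y (l n)) : ℝ) / ((pairExpand x y (l n)).length : ℝ))
      atTop
      (𝓝 ((∑ f : Fin r.length → Option A, (gg x y r (List.ofFn f) : ℝ) * c f) / (1 + c0))) := by
  have hLtop : Tendsto (fun n => ((l n).length : ℝ)) atTop atTop :=
    tendsto_natCast_atTop_atTop.comp hlen
  have hLpos : ∀ᶠ n in atTop, 0 < ((l n).length : ℝ) := hLtop.eventually_gt_atTop 0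
  have hS : Tendsto (fun n => ∑ f : Fin r.length → Option A,
      (gg x y r (List.ofFn f) : ℝ) * ((occ (List.ofFn f) (l n) : ℝ) / ((l n).length : ℝ)))
      atTop (𝓝 (∑ f : Fin r.length → Option A, (gg x y r (List.ofFn f) : ℝ) * c f)) :=
    tendsto_finset_sum _ fun f _ => (hc f).const_mul _
  have h2m : Tendsto (fun n => (2 * r.length : ℝ) / ((l n).length : ℝ)) atTop (𝓝 0) :=
    tendsto_const_nhds.div_atTop hLtop
  have hnum : Tendsto (fun n => (occ r (pairExpand x y (l n)) : ℝ) / ((l n).length : ℝ)) atTop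
      (𝓝 (∑ f : Fin r.length → Option A, (gg x y r (List.ofFn f) : ℝ) * c f)) := by
    refine tendsto_of_tendsto_of_tendsto_of_le_of_le' hS (by simpa using hS.add h2m) ?_ ?_
    · filter_upwards [hLpos] with n hn
      have hle := sum_gg_le_occ_pairExpand x y r hr (l n)
      have hle' : (∑ f : Fin r.length → Option A,
          (gg x y r (List.ofFn f) : ℝ) * (occ (List.ofFn f) (l n) : ℝ)) ≤
          (occ r (pairExpand x y (l n)) : ℝ) := by exact_mod_cast hle
      calc ∑ f : Fin r.length → Option A, (gg x y r (List.ofFn f) : ℝ) *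
            ((occ (List.ofFn f) (l n) : ℝ) / ((l n).length : ℝ))
          = (∑ f : Fin r.length → Option A,
              (gg x y r (List.ofFn f) : ℝ) * (occ (List.ofFn f) (l n) : ℝ)) /
              ((l n).length : ℝ) := by
            rw [Finset.sum_div]
            exact Finset.sum_congr rfl fun f _ => (mul_div_assoc _ _ _).symm
        _ ≤ (occ r (pairExpand x y (l n)) : ℝ) / ((l n).length : ℝ) := by gcongr
    · filter_upwards [hLpos] with n hn
      have hle := occ_pairExpand_le_sum_gg x y r hr (l n)
      have hle' : (occ r (pairExpand x y (l n)) : ℝ) ≤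
          (∑ f : Fin r.length → Option A,
            (gg x y r (List.ofFn f) : ℝ) * (occ (List.ofFn f) (l n) : ℝ)) +
            2 * r.length := by exact_mod_cast hle
      calc (occ r (pairExpand x y (l n)) : ℝ) / ((l n).length : ℝ)
          ≤ ((∑ f : Fin r.length → Option A,
              (gg x y r (List.ofFn f) : ℝ) * (occ (List.ofFn f) (l n) : ℝ)) +
              2 * r.length) / ((l n).length : ℝ) := by gcongr
        _ = ∑ f : Fin r.length → Option A, (gg x y r (List.ofFn f) : ℝ) *
              ((occ (List.ofFn f) (l n) : ℝ) / ((l n).length : ℝ)) +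
              (2 * r.length : ℝ) / ((l n).length : ℝ) := by
            rw [add_div, Finset.sum_div]
            congr 1
            exact Finset.sum_congr rfl fun f _ => mul_div_assoc _ _ _
  have hden : Tendsto (fun n => ((pairExpand x y (l n)).length : ℝ) / ((l n).length : ℝ))
      atTop (𝓝 (1 + c0)) := by
    apply Tendsto.congr' ?_ (tendsto_const_nhds.add h0)
    filter_upwards [hLpos] with n hn
    have hne : ((l n).length : ℝ) ≠ 0 := ne_of_gt hn
    rw [length_pairExpand_occ]
    push_cast
    field_simp
  have hfinal := hnum.div hden (by positivity)
  apply Tendsto.congr' ?_ hfinal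
  filter_upwards [hLpos] with n hn
  have hne : ((l n).length : ℝ) ≠ 0 := ne_of_gt hn
  have hb : (0:ℝ) < ((pairExpand x y (l n)).length : ℝ) := by
    have h1 := length_le_length_pairExpand x y (l n)
    have h2 : 0 < (l n).length := by exact_mod_cast hn
    exact_mod_cast by omega
  rw [Pi.div_apply, div_div_div_cancel_right₀ hne]

end Anal
section PiSys

open Filter Topology MeasureTheory

variable {B : Type*} [MeasurableSpace B] [MeasurableSingletonClass B] [Fintype B]

/-- Finite-coordinate cylinder sets. -/
def fcyl (F : Finset ℤ) (f : ℤ → B) : Set (ℤ → B) := {w | ∀ i ∈ F, w i = f i}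

theorem measurableSet_fcyl (F : Finset ℤ) (f : ℤ → B) : MeasurableSet (fcyl F f) := by
  have : fcyl F f = ⋂ i ∈ F, (fun w : ℤ → B => w i) ⁻¹' {f i} := by
    ext w; simp [fcyl]
  rw [this]
  exact MeasurableSet.biInter F.countable_toSet fun i _ =>
    (measurable_pi_apply i) (MeasurableSet.singleton _)

theorem isPiSystem_fcyl :
    IsPiSystem {S : Set (ℤ → B) | ∃ (F : Finset ℤ) (f : ℤ → B), S = fcyl F f} := by
  rintro S₁ ⟨F, f, rfl⟩ S₂ ⟨G, g, rfl⟩ ⟨w₀, hw₀F, hw₀G⟩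
  refine ⟨F ∪ G, w₀, ?_⟩
  ext w
  simp only [fcyl, Set.mem_inter_iff, Set.mem_setOf_eq, Finset.mem_union]
  constructor
  · rintro ⟨h1, h2⟩ i hi
    rcases hi with hi | hi
    · rw [h1 i hi, ← hw₀F i hi]
    · rw [h2 i hi, ← hw₀G i hi]
  · intro h
    exact ⟨fun i hi => by rw [h i (Or.inl hi), hw₀F i hi],
           fun i hi => by rw [h i (Or.inr hi), hw₀G i hi]⟩

theorem generateFrom_fcyl :
    MeasurableSpace.generateFrom
        {S : Set (ℤ → B) | ∃ (F : Finset ℤ) (f : ℤ → B), S = fcyl F f} =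
      (inferInstance : MeasurableSpace (ℤ → B)) := by
  apply le_antisymm
  · rw [MeasurableSpace.generateFrom_le_iff]
    rintro S ⟨F, f, rfl⟩
    exact measurableSet_fcyl F f
  · have hev : ∀ i : ℤ, Measurable[MeasurableSpace.generateFrom
        {S : Set (ℤ → B) | ∃ (F : Finset ℤ) (f : ℤ → B), S = fcyl F f}]
        (fun w : ℤ → B => w i) := by
      intro i s hs
      have : (fun w : ℤ → B => w i) ⁻¹' s = ⋃ b ∈ s, fcyl {i} (fun _ => b) := by
        ext w
        simp [fcyl]
      rw [this]
      refine MeasurableSet.biUnion s.to_countable fun b _ =>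
        MeasurableSpace.measurableSet_generateFrom ⟨{i}, fun _ => b, rfl⟩
    have hpi : (inferInstance : MeasurableSpace (ℤ → B)) =
        ⨆ i : ℤ, MeasurableSpace.comap (fun w : ℤ → B => w i) inferInstance := rfl
    rw [hpi]
    exact iSup_le fun i => measurable_iff_comap_le.mp (hev i)

theorem fcyl_Icc_eq_preimage (N : ℕ) (f : ℤ → B) :
    shift^[N] ⁻¹' fcyl (Finset.Icc (-(N:ℤ)) N) f =
      cyl (List.ofFn (fun k : Fin (2*N+1) => f ((k : ℕ) - (N:ℤ)))) := by
  ext w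
  simp only [Set.mem_preimage, fcyl, Set.mem_setOf_eq, cyl, Finset.mem_Icc]
  constructor
  · intro h i
    have hi : (i : ℕ) < 2*N+1 := by
      have := i.isLt
      simpa using this
    have hval := h (((i:ℕ):ℤ) - N) ⟨by omega, by omega⟩
    rw [shift_iterate] at hval
    rw [show ((i:ℕ):ℤ) - N + N = ((i:ℕ):ℤ) by ring] at hval
    rw [List.get_eq_getElem, List.getElem_ofFn]
    exact hval
  · intro h j hj
    have hklt : (j + (N:ℤ)).toNat <
        (List.ofFn fun k : Fin (2*N+1) => f ((k:ℕ) - (N:ℤ))).length := by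
      simp only [List.length_ofFn]
      omega
    have hv := h ⟨(j + (N:ℤ)).toNat, hklt⟩
    rw [List.get_eq_getElem, List.getElem_ofFn] at hv
    rw [shift_iterate]
    rw [show j + (N:ℤ) = (((j + (N:ℤ)).toNat : ℕ) : ℤ) by omega]
    conv_rhs => rw [show j = (((j + (N:ℤ)).toNat : ℕ) : ℤ) - N by omega]
    exact hv

theorem measure_eq_of_cyl (μ ρ : Measure (ℤ → B)) [IsProbabilityMeasure μ]
    [IsProbabilityMeasure ρ] (hμ : MeasurePreserving shift μ μ)
    (hρ : MeasurePreserving shift ρ ρ)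
    (h : ∀ r : List B, ρ (cyl r) = μ (cyl r)) : ρ = μ := by
  classical
  -- step 1: agreement on full-interval cylinders
  have hfull : ∀ (N : ℕ) (f : ℤ → B),
      ρ (fcyl (Finset.Icc (-(N:ℤ)) N) f) = μ (fcyl (Finset.Icc (-(N:ℤ)) N) f) := by
    intro N f
    have hmeas := measurableSet_fcyl (B := B) (Finset.Icc (-(N:ℤ)) N) f
    have h1 : ρ (fcyl (Finset.Icc (-(N:ℤ)) N) f) =
        ρ (cyl (List.ofFn (fun k : Fin (2*N+1) => f ((k : ℕ) - (N:ℤ))))) := by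
      rw [← fcyl_Icc_eq_preimage, (hρ.iterate N).measure_preimage hmeas.nullMeasurableSet]
    have h2 : μ (fcyl (Finset.Icc (-(N:ℤ)) N) f) =
        μ (cyl (List.ofFn (fun k : Fin (2*N+1) => f ((k : ℕ) - (N:ℤ))))) := by
      rw [← fcyl_Icc_eq_preimage, (hμ.iterate N).measure_preimage hmeas.nullMeasurableSet]
    rw [h1, h2, h]
  -- step 2: agreement on all fcyl with support inside the interval, by removing points
  have hstep : ∀ (N : ℕ) (G : Finset ℤ) (f : ℤ → B),
      ρ (fcyl (Finset.Icc (-(N:ℤ)) N \ G) f) = μ (fcyl (Finset.Icc (-(N:ℤ)) N \ G) f) := by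
    intro N G
    induction G using Finset.induction with
    | empty => simpa using hfull N
    | @insert j G hj ih =>
        intro f
        by_cases hjmem : j ∈ Finset.Icc (-(N:ℤ)) N \ G
        · have hset : Finset.Icc (-(N:ℤ)) N \ insert j G =
              (Finset.Icc (-(N:ℤ)) N \ G).erase j := by
            ext i
            simp only [Finset.mem_sdiff, Finset.mem_insert, Finset.mem_erase]
            tauto
          have hunion : fcyl (Finset.Icc (-(N:ℤ)) N \ insert j G) f =
              ⋃ b : B, fcyl (Finset.Icc (-(N:ℤ)) N \ G) (Function.update f j b) := by
            rw [hset]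
            ext w
            simp only [fcyl, Set.mem_setOf_eq, Set.mem_iUnion]
            constructor
            · intro hw
              refine ⟨w j, fun i hi => ?_⟩
              rcases eq_or_ne i j with rfl | hne
              · simp
              · rw [Function.update_of_ne hne]
                exact hw i (Finset.mem_erase.mpr ⟨hne, hi⟩)
            · rintro ⟨b, hb⟩ i hi
              have hne : i ≠ j := (Finset.mem_erase.mp hi).1
              have := hb i (Finset.mem_erase.mp hi).2
              rwa [Function.update_of_ne hne] at this
          have hdisj : Pairwise (Function.onFun Disjoint fun b : B =>
              fcyl (Finset.Icc (-(N:ℤ)) N \ G) (Function.update f j b)) := by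
            intro b b' hbb'
            simp only [Function.onFun, Set.disjoint_left]
            intro w hw hw'
            have h1 := hw j hjmem
            have h2 := hw' j hjmem
            simp only [Function.update_self] at h1 h2
            exact hbb' (h1.symm.trans h2)
          rw [hunion, measure_iUnion hdisj fun b => measurableSet_fcyl _ _,
            measure_iUnion hdisj fun b => measurableSet_fcyl _ _]
          exact tsum_congr fun b => ih _
        · have hset : Finset.Icc (-(N:ℤ)) N \ insert j G = Finset.Icc (-(N:ℤ)) N \ G := by
            ext i
            simp only [Finset.mem_sdiff, Finset.mem_insert]
            constructor
            · rintro ⟨h1, h2⟩; exact ⟨h1, fun hc => h2 (Or.inr hc)⟩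
            · rintro ⟨h1, h2⟩
              refine ⟨h1, fun hc => ?_⟩
              rcases hc with rfl | hc
              · exact hjmem (Finset.mem_sdiff.mpr ⟨h1, h2⟩)
              · exact h2 hc
          rw [hset]
          exact ih f
  -- step 3: agreement on all fcyl
  have hall : ∀ (F : Finset ℤ) (f : ℤ → B), ρ (fcyl F f) = μ (fcyl F f) := by
    intro F f
    set N : ℕ := F.sup fun i => i.natAbs with hN
    have hsub : F ⊆ Finset.Icc (-(N:ℤ)) N := by
      intro i hi
      have : i.natAbs ≤ N := Finset.le_sup (f := fun i : ℤ => i.natAbs) hi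
      simp only [Finset.mem_Icc]
      omega
    have : F = Finset.Icc (-(N:ℤ)) N \ (Finset.Icc (-(N:ℤ)) N \ F) := by
      ext i
      simp only [Finset.mem_sdiff]
      constructor
      · intro hi; exact ⟨hsub hi, fun h => h.2 hi⟩
      · rintro ⟨h1, h2⟩
        by_contra hc
        exact h2 ⟨h1, hc⟩
    rw [this]
    exact hstep N _ f
  -- step 4: π-system argument
  refine MeasureTheory.ext_of_generate_finite
    {S : Set (ℤ → B) | ∃ (F : Finset ℤ) (f : ℤ → B), S = fcyl F f}
    generateFrom_fcyl.symm isPiSystem_fcyl ?_ ?_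
  · rintro S ⟨F, f, rfl⟩
    exact hall F f
  · simp

end PiSys
section Steps

open Filter Topology MeasureTheory

theorem tendsto_sub_add_one_div (m : ℕ) :
    Tendsto (fun n : ℕ => ((n - m + 1 : ℕ) : ℝ) / (n : ℝ)) atTop (𝓝 1) := by
  have h0 : Tendsto (fun n : ℕ => 1 - ((m:ℝ) - 1)/(n:ℝ)) atTop (𝓝 1) := by
    simpa using tendsto_const_nhds.sub (tendsto_const_div_atTop_nhds_zero_nat ((m:ℝ) - 1))
  apply h0.congr'
  filter_upwards [eventually_ge_atTop (max m 1)] with n hn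
  have hm : m ≤ n := le_trans (le_max_left _ _) hn
  have h1 : 1 ≤ n := le_trans (le_max_right _ _) hn
  have hne : (n:ℝ) ≠ 0 := by
    have : (0:ℝ) < n := by exact_mod_cast h1
    linarith
  rw [Nat.cast_add, Nat.cast_sub hm]
  field_simp
  ring

theorem step_mu {A : Type*} [Fintype A] [DecidableEq A] [MeasurableSpace A]
    [MeasurableSingletonClass A]
    (μ : Measure (ℤ → A)) [IsProbabilityMeasure μ] (hμmp : MeasurePreserving shift μ μ)
    (r : List A) (hr : r ≠ []) (c : ℝ)
    (hae : ∀ᵐ w ∂μ, Tendsto (fun n : ℕ => (occ r (wordOf w n) : ℝ) / (n : ℝ)) atTop (𝓝 c)) :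
    (μ (cyl r)).toReal = c := by
  have hnonempty : Nonempty (ℤ → A) := by
    by_contra h
    rw [not_nonempty_iff] at h
    have : μ Set.univ = 0 := by
      rw [Set.univ_eq_empty_iff.mpr (by infer_instance)]
      exact measure_empty
    rw [measure_univ] at this
    simp at this
  have hmeas : ∀ n : ℕ, AEStronglyMeasurable
      (fun w : ℤ → A => (occ r (wordOf w n) : ℝ) / (n : ℝ)) μ :=
    fun n => (measurable_word_fun n (fun l => (occ r l : ℝ) / (n : ℝ))).aestronglyMeasurable
  have hbound : ∀ n : ℕ, ∀ᵐ w ∂μ,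
      ‖(occ r (wordOf w n) : ℝ) / (n : ℝ)‖ ≤ 1 := by
    intro n
    refine Filter.Eventually.of_forall fun w => ?_
    rcases Nat.eq_zero_or_pos n with rfl | hn
    · simp
    · have h1 : (occ r (wordOf w n) : ℝ) ≤ n := by
        have := occ_le_length r (wordOf w n)
        rw [length_wordOf] at this
        exact_mod_cast this
      have h2 : (0:ℝ) < n := by exact_mod_cast hn
      rw [Real.norm_eq_abs, abs_div, abs_of_nonneg (by positivity), abs_of_pos h2]
      rw [div_le_one h2]
      exact h1
  have hdom := MeasureTheory.tendsto_integral_of_dominated_convergence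
    (F := fun n (w : ℤ → A) => (occ r (wordOf w n) : ℝ) / (n : ℝ))
    (f := fun _ => c) (bound := fun _ => (1:ℝ)) hmeas (integrable_const 1) hbound hae
  have hconst : ∫ _, c ∂μ = c := by
    rw [integral_const, probReal_univ]
    simp
  rw [hconst] at hdom
  have hval : ∀ n : ℕ, r.length ≤ n →
      ∫ w, (occ r (wordOf w n) : ℝ) / (n : ℝ) ∂μ =
        ((n - r.length + 1 : ℕ) : ℝ) / (n : ℝ) * (μ (cyl r)).toReal := by
    intro n hn
    rw [integral_div, integral_occ_wordOf μ hμmp r hr n hn]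
    ring
  have hlim2 : Tendsto (fun n : ℕ => ∫ w, (occ r (wordOf w n) : ℝ) / (n : ℝ) ∂μ) atTop
      (𝓝 ((μ (cyl r)).toReal)) := by
    have := (tendsto_sub_add_one_div r.length).mul_const ((μ (cyl r)).toReal)
    rw [one_mul] at this
    apply this.congr'
    filter_upwards [eventually_ge_atTop r.length] with n hn
    exact (hval n hn).symm
  exact tendsto_nhds_unique hlim2 hdom

end Steps
section StepNu

open Filter Topology MeasureTheory

theorem step_nu {A : Type*} [Fintype A] [DecidableEq A] [MeasurableSpace A]
    [MeasurableSingletonClass A] (x y : A)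
    (ν : Measure (ℤ → Option A)) [IsProbabilityMeasure ν]
    (hνmp : MeasurePreserving shift ν ν)
    (r : List A) (hr : r ≠ []) (ρr : ℝ) (hρr : 0 ≤ ρr)
    (hlimit : ∀ᵐ z ∂ν, Tendsto (fun n : ℕ =>
      (occ r (pairExpand x y (wordOf z n)) : ℝ) /
        ((pairExpand x y (wordOf z n)).length : ℝ)) atTop (𝓝 ρr)) :
    (∑ f : Fin r.length → Option A,
        (gg x y r (List.ofFn f) : ℝ) * (ν (cyl (List.ofFn f))).toReal)
      = ρr * (1 + (ν (cyl ([none] : List (Option A)))).toReal) := by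
  classical
  set m := r.length with hm
  have hmpos : 0 < m := List.length_pos_iff.mpr hr
  -- the functionals
  set Φ : ℕ → List (Option A) → ℝ := fun n l =>
    (∑ f : Fin m → Option A, (gg x y r (List.ofFn f) : ℝ) * (occ (List.ofFn f) l : ℝ)) / n
      - ρr * (((n:ℝ) + (occ [none] l : ℝ)) / n) with hΦ
  set S : ℝ := ∑ f : Fin m → Option A,
    (gg x y r (List.ofFn f) : ℝ) * (ν (cyl (List.ofFn f))).toReal with hS
  set ν0 : ℝ := (ν (cyl ([none] : List (Option A)))).toReal with hν0
  -- basic facts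
  have hNlen : ∀ (z : ℤ → Option A) (n : ℕ),
      ((pairExpand x y (wordOf z n)).length : ℝ) =
        (n : ℝ) + (occ [none] (wordOf z n) : ℝ) := by
    intro z n
    rw [length_pairExpand_occ, length_wordOf]
    push_cast
    ring
  have hocc0le : ∀ (z : ℤ → Option A) (n : ℕ), (occ [none] (wordOf z n) : ℝ) ≤ n := by
    intro z n
    have := occ_le_length ([none] : List (Option A)) (wordOf z n)
    rw [length_wordOf] at this
    exact_mod_cast this
  have hoccfle : ∀ (f : Fin m → Option A) (z : ℤ → Option A) (n : ℕ),
      (occ (List.ofFn f) (wordOf z n) : ℝ) ≤ n := by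
    intro f z n
    have := occ_le_length (List.ofFn f) (wordOf z n)
    rw [length_wordOf] at this
    exact_mod_cast this
  -- pointwise limit of Φ n (wordOf z n) is 0, a.e.
  have hae : ∀ᵐ z ∂ν, Tendsto (fun n : ℕ => Φ n (wordOf z n)) atTop (𝓝 0) := by
    filter_upwards [hlimit] with z hz
    -- abbreviations (as plain functions)
    have hdiffbound : ∀ n : ℕ,
        |(∑ f : Fin m → Option A,
            (gg x y r (List.ofFn f) : ℝ) * (occ (List.ofFn f) (wordOf z n) : ℝ))
          - (occ r (pairExpand x y (wordOf z n)) : ℝ)| ≤ 2 * m := by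
      intro n
      have h1 := sum_gg_le_occ_pairExpand x y r hr (wordOf z n)
      have h2 := occ_pairExpand_le_sum_gg x y r hr (wordOf z n)
      have h1' : (∑ f : Fin m → Option A,
          (gg x y r (List.ofFn f) : ℝ) * (occ (List.ofFn f) (wordOf z n) : ℝ))
          ≤ (occ r (pairExpand x y (wordOf z n)) : ℝ) := by exact_mod_cast h1
      have h2' : (occ r (pairExpand x y (wordOf z n)) : ℝ) ≤
          (∑ f : Fin m → Option A,
            (gg x y r (List.ofFn f) : ℝ) * (occ (List.ofFn f) (wordOf z n) : ℝ)) + 2 * m := by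
        exact_mod_cast h2
      rw [abs_le]
      constructor <;> linarith
    have hNlow : ∀ n : ℕ, (n : ℝ) ≤ ((pairExpand x y (wordOf z n)).length : ℝ) := by
      intro n
      rw [hNlen]
      have := hocc0le z n
      have h0 : (0:ℝ) ≤ (occ [none] (wordOf z n) : ℝ) := by positivity
      linarith
    have hNhigh : ∀ n : ℕ, ((pairExpand x y (wordOf z n)).length : ℝ) ≤ 2 * n := by
      intro n
      rw [hNlen]
      have := hocc0le z n
      linarith
    -- the quotient with denominator N also converges
    have hzero : Tendsto (fun n : ℕ =>
        ((∑ f : Fin m → Option A,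
            (gg x y r (List.ofFn f) : ℝ) * (occ (List.ofFn f) (wordOf z n) : ℝ))
          - (occ r (pairExpand x y (wordOf z n)) : ℝ)) /
          ((pairExpand x y (wordOf z n)).length : ℝ)) atTop (𝓝 0) := by
      apply squeeze_zero_norm' (a := fun n : ℕ => (2 * m : ℝ) / n)
      · filter_upwards [eventually_ge_atTop 1] with n hn
        have hnpos : (0:ℝ) < n := by exact_mod_cast hn
        have hNpos : (0:ℝ) < ((pairExpand x y (wordOf z n)).length : ℝ) :=
          lt_of_lt_of_le hnpos (hNlow n)
        rw [Real.norm_eq_abs, abs_div, abs_of_pos hNpos]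
        exact div_le_div₀ (by positivity) (hdiffbound n) hnpos (hNlow n)
      · exact tendsto_const_div_atTop_nhds_zero_nat _
    have key1 : Tendsto (fun n : ℕ =>
        (∑ f : Fin m → Option A,
          (gg x y r (List.ofFn f) : ℝ) * (occ (List.ofFn f) (wordOf z n) : ℝ)) /
          ((pairExpand x y (wordOf z n)).length : ℝ)) atTop (𝓝 ρr) := by
      have hsum := hz.add hzero
      rw [add_zero] at hsum
      apply hsum.congr
      intro n
      rw [← add_div]
      congr 1
      ring
    have key2 := key1.sub_const ρr
    rw [sub_self] at key2
    -- squeeze: |Φ n (wordOf z n)| ≤ 2 |quotient - ρr|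
    apply squeeze_zero_norm' (a := fun n : ℕ => 2 * |(∑ f : Fin m → Option A,
        (gg x y r (List.ofFn f) : ℝ) * (occ (List.ofFn f) (wordOf z n) : ℝ)) /
          ((pairExpand x y (wordOf z n)).length : ℝ) - ρr|)
    · filter_upwards [eventually_ge_atTop 1] with n hn
      have hnpos : (0:ℝ) < n := by exact_mod_cast hn
      have hNpos : (0:ℝ) < ((pairExpand x y (wordOf z n)).length : ℝ) :=
        lt_of_lt_of_le hnpos (hNlow n)
      have heq : Φ n (wordOf z n) =
          ((∑ f : Fin m → Option A,
            (gg x y r (List.ofFn f) : ℝ) * (occ (List.ofFn f) (wordOf z n) : ℝ)) /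
            ((pairExpand x y (wordOf z n)).length : ℝ) - ρr) *
            (((pairExpand x y (wordOf z n)).length : ℝ) / n) := by
        rw [hΦ]
        simp only
        rw [← hNlen z n]
        field_simp
      rw [heq, Real.norm_eq_abs, abs_mul]
      have h2 : |((pairExpand x y (wordOf z n)).length : ℝ) / n| ≤ 2 := by
        rw [abs_of_pos (by positivity)]
        rw [div_le_iff₀ hnpos]
        have := hNhigh n
        linarith
      calc |(∑ f : Fin m → Option A,
            (gg x y r (List.ofFn f) : ℝ) * (occ (List.ofFn f) (wordOf z n) : ℝ)) /
            ((pairExpand x y (wordOf z n)).length : ℝ) - ρr| *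
            |((pairExpand x y (wordOf z n)).length : ℝ) / n|
          ≤ |(∑ f : Fin m → Option A,
            (gg x y r (List.ofFn f) : ℝ) * (occ (List.ofFn f) (wordOf z n) : ℝ)) /
            ((pairExpand x y (wordOf z n)).length : ℝ) - ρr| * 2 := by
            exact mul_le_mul_of_nonneg_left h2 (abs_nonneg _)
        _ = 2 * |(∑ f : Fin m → Option A,
            (gg x y r (List.ofFn f) : ℝ) * (occ (List.ofFn f) (wordOf z n) : ℝ)) /
            ((pairExpand x y (wordOf z n)).length : ℝ) - ρr| := mul_comm _ _
    · have := key2.abs.const_mul (2:ℝ)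
      simpa using this
  -- measurability and boundedness
  set CB : ℝ := 2 * (Fintype.card (Fin m → Option A) : ℝ) + ρr * 2 with hCB
  have hΦbound : ∀ (n : ℕ) (z : ℤ → Option A), |Φ n (wordOf z n)| ≤ CB := by
    intro n z
    rcases Nat.eq_zero_or_pos n with rfl | hn
    · have h0 : Φ 0 (wordOf z 0) = 0 := by
        rw [hΦ]
        norm_num
      rw [h0, abs_zero, hCB]
      positivity
    · have hnpos : (0:ℝ) < n := by exact_mod_cast hn
      have hσ : (0:ℝ) ≤ (∑ f : Fin m → Option A,
          (gg x y r (List.ofFn f) : ℝ) * (occ (List.ofFn f) (wordOf z n) : ℝ)) := by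
        apply Finset.sum_nonneg
        intro f _
        positivity
      have hσle : (∑ f : Fin m → Option A,
          (gg x y r (List.ofFn f) : ℝ) * (occ (List.ofFn f) (wordOf z n) : ℝ)) ≤
          (Fintype.card (Fin m → Option A) : ℝ) * (2 * n) := by
        calc (∑ f : Fin m → Option A,
            (gg x y r (List.ofFn f) : ℝ) * (occ (List.ofFn f) (wordOf z n) : ℝ))
            ≤ ∑ _f : Fin m → Option A, (2:ℝ) * n := by
              apply Finset.sum_le_sum
              intro f _
              have h1 : (gg x y r (List.ofFn f) : ℝ) ≤ 2 := by
                exact_mod_cast gg_le_two x y r (List.ofFn f)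
              have h2 := hoccfle f z n
              have h3 : (0:ℝ) ≤ (occ (List.ofFn f) (wordOf z n) : ℝ) := by positivity
              calc (gg x y r (List.ofFn f) : ℝ) * (occ (List.ofFn f) (wordOf z n) : ℝ)
                  ≤ 2 * (occ (List.ofFn f) (wordOf z n) : ℝ) :=
                    mul_le_mul_of_nonneg_right h1 h3
                _ ≤ 2 * n := by linarith
          _ = (Fintype.card (Fin m → Option A) : ℝ) * (2 * n) := by
              rw [Finset.sum_const, Finset.card_univ, nsmul_eq_mul]
      have hterm1 : |(∑ f : Fin m → Option A,
          (gg x y r (List.ofFn f) : ℝ) * (occ (List.ofFn f) (wordOf z n) : ℝ)) / n| ≤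
          2 * (Fintype.card (Fin m → Option A) : ℝ) := by
        rw [abs_div, abs_of_nonneg hσ, abs_of_pos hnpos, div_le_iff₀ hnpos]
        calc _ ≤ (Fintype.card (Fin m → Option A) : ℝ) * (2 * n) := hσle
          _ = 2 * (Fintype.card (Fin m → Option A) : ℝ) * n := by ring
      have hterm2 : |ρr * (((n:ℝ) + (occ [none] (wordOf z n) : ℝ)) / n)| ≤ ρr * 2 := by
        have h0 : (0:ℝ) ≤ (occ [none] (wordOf z n) : ℝ) := by positivity
        have h1 := hocc0le z n
        rw [abs_mul, abs_of_nonneg hρr, abs_div, abs_of_nonneg (by linarith), abs_of_pos hnpos]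
        apply mul_le_mul_of_nonneg_left _ hρr
        rw [div_le_iff₀ hnpos]
        linarith
      rw [hΦ]
      simp only
      calc |_ - _| ≤ |(∑ f : Fin m → Option A,
            (gg x y r (List.ofFn f) : ℝ) * (occ (List.ofFn f) (wordOf z n) : ℝ)) / n| +
            |ρr * (((n:ℝ) + (occ [none] (wordOf z n) : ℝ)) / n)| := abs_sub _ _
        _ ≤ CB := by
            rw [hCB]
            linarith
  -- dominated convergence
  have hdom := MeasureTheory.tendsto_integral_of_dominated_convergence
    (F := fun n (z : ℤ → Option A) => Φ n (wordOf z n)) (f := fun _ => (0:ℝ))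
    (bound := fun _ => CB)
    (fun n => (measurable_word_fun n (Φ n)).aestronglyMeasurable)
    (integrable_const CB)
    (fun n => Filter.Eventually.of_forall fun z => by
      rw [Real.norm_eq_abs]; exact hΦbound n z)
    hae
  rw [MeasureTheory.integral_zero] at hdom
  -- compute the integrals
  have hIocc : ∀ (n : ℕ) (t : List (Option A)), t ≠ [] →
      Integrable (fun z : ℤ → Option A => (occ t (wordOf z n) : ℝ)) ν := by
    intro n t ht
    apply integrable_word_fun ν n (fun l => (occ t l : ℝ)) n
    intro z
    have := occ_le_length t (wordOf z n)
    rw [length_wordOf] at this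
    rw [abs_of_nonneg (by positivity)]
    exact_mod_cast this
  have hval : ∀ n : ℕ, m ≤ n → 1 ≤ n →
      ∫ z, Φ n (wordOf z n) ∂ν = ((n - m + 1 : ℕ) : ℝ) / n * S - ρr * (1 + ν0) := by
    intro n hmn h1n
    have hnne : (n:ℝ) ≠ 0 := by
      have : (0:ℝ) < n := by exact_mod_cast h1n
      linarith
    have hint1 : Integrable (fun z : ℤ → Option A =>
        (∑ f : Fin m → Option A,
          (gg x y r (List.ofFn f) : ℝ) * (occ (List.ofFn f) (wordOf z n) : ℝ)) / n) ν := by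
      apply Integrable.div_const
      apply integrable_finset_sum
      intro f _
      exact (hIocc n (List.ofFn f) (by
        have : (List.ofFn f).length = m := List.length_ofFn (f := f)
        intro hc
        rw [hc] at this
        simp at this
        omega)).const_mul _
    have hint2 : Integrable (fun z : ℤ → Option A =>
        ρr * (((n:ℝ) + (occ [none] (wordOf z n) : ℝ)) / n)) ν := by
      apply Integrable.const_mul
      apply Integrable.div_const
      exact (integrable_const ((n:ℝ))).add (hIocc n [none] (by simp))
    rw [hΦ]
    simp only
    rw [MeasureTheory.integral_sub hint1 hint2]
    have e1 : ∫ z, (∑ f : Fin m → Option A,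
        (gg x y r (List.ofFn f) : ℝ) * (occ (List.ofFn f) (wordOf z n) : ℝ)) / n ∂ν =
        ((n - m + 1 : ℕ) : ℝ) / n * S := by
      rw [MeasureTheory.integral_div]
      rw [MeasureTheory.integral_finset_sum _ (fun f _ => (hIocc n (List.ofFn f) (by
        have : (List.ofFn f).length = m := List.length_ofFn (f := f)
        intro hc
        rw [hc] at this
        simp at this
        omega)).const_mul _)]
      have e2 : ∀ f : Fin m → Option A,
          ∫ z, (gg x y r (List.ofFn f) : ℝ) * (occ (List.ofFn f) (wordOf z n) : ℝ) ∂ν =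
            (gg x y r (List.ofFn f) : ℝ) *
              (((n - m + 1 : ℕ) : ℝ) * (ν (cyl (List.ofFn f))).toReal) := by
        intro f
        rw [MeasureTheory.integral_const_mul]
        congr 1
        have hlenf : (List.ofFn f).length = m := List.length_ofFn (f := f)
        have := integral_occ_wordOf ν hνmp (List.ofFn f) (by
          intro hc
          rw [hc] at hlenf
          simp at hlenf
          omega) n (by rw [hlenf]; exact hmn)
        rw [this, hlenf]
      rw [Finset.sum_congr rfl fun f _ => e2 f]
      rw [hS, Finset.mul_sum]
      rw [Finset.sum_div]
      apply Finset.sum_congr rfl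
      intro f _
      ring
    have e3 : ∫ z, ρr * (((n:ℝ) + (occ [none] (wordOf z n) : ℝ)) / n) ∂ν =
        ρr * (1 + ν0) := by
      rw [MeasureTheory.integral_const_mul]
      congr 1
      rw [MeasureTheory.integral_div]
      rw [MeasureTheory.integral_add (integrable_const _) (hIocc n [none] (by simp))]
      rw [MeasureTheory.integral_const, probReal_univ]
      have := integral_occ_wordOf ν hνmp ([none] : List (Option A)) (by simp) n
        (by simp; omega)
      rw [this]
      simp only [List.length_cons, List.length_nil]
      rw [hν0]
      have : ((n - 1 + 1 : ℕ) : ℝ) = (n : ℝ) := by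
        have : n - 1 + 1 = n := by omega
        rw [this]
      rw [this]
      field_simp
      ring
    rw [e1, e3]
  -- conclude
  have hlimE : Tendsto (fun n : ℕ => ((n - m + 1 : ℕ) : ℝ) / n * S - ρr * (1 + ν0)) atTop
      (𝓝 (S - ρr * (1 + ν0))) := by
    have := (tendsto_sub_add_one_div m).mul_const S
    rw [one_mul] at this
    exact this.sub_const _
  have hlim2 : Tendsto (fun n : ℕ => ∫ z, Φ n (wordOf z n) ∂ν) atTop
      (𝓝 (S - ρr * (1 + ν0))) := by
    apply hlimE.congr'
    filter_upwards [eventually_ge_atTop (max m 1)] with n hn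
    exact (hval n (le_trans (le_max_left _ _) hn) (le_trans (le_max_right _ _) hn)).symm
  have := tendsto_nhds_unique hdom hlim2
  linarith

end StepNu

/-- `𝒮(𝒢μ) = μ`, where `𝒢μ` and `𝒮ν` are characterized by the a.e. limits of
occurrence frequencies under `G` and `S` respectively. -/
theorem stmt_3 {A : Type*} [Fintype A] [DecidableEq A] [MeasurableSpace A]
    [MeasurableSingletonClass A] (x y : A)
    (μ : Measure (ℤ → A)) [IsProbabilityMeasure μ] (hμ : Ergodic shift μ)
    (ν : Measure (ℤ → Option A)) [IsProbabilityMeasure ν] (hν : Ergodic shift ν)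
    (hGμ : ∀ s : List (Option A), s ≠ [] →
      ∀ᵐ w ∂μ, Tendsto
        (fun n : ℕ =>
          (occ s (pairSubst x y (wordOf w n)) : ℝ) /
            ((pairSubst x y (wordOf w n)).length : ℝ))
        atTop (𝓝 ((ν (cyl s)).toReal)))
    (ρ : Measure (ℤ → A)) [IsProbabilityMeasure ρ] (hρ : Ergodic shift ρ)
    (hSν : ∀ r : List A, r ≠ [] →
      ∀ᵐ z ∂ν, Tendsto
        (fun n : ℕ =>
          (occ r (pairExpand x y (wordOf z n)) : ℝ) /
            ((pairExpand x y (wordOf z n)).length : ℝ))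
        atTop (𝓝 ((ρ (cyl r)).toReal))) :
    ρ = μ := by
  classical
  have hνmp := hν.toMeasurePreserving
  have hμmp := hμ.toMeasurePreserving
  have hρmp := hρ.toMeasurePreserving
  have hcyl_eq : ∀ r : List A, r ≠ [] → ρ (cyl r) = μ (cyl r) := by
    intro r hrne
    have hmpos : 0 < r.length := List.length_pos_iff.mpr hrne
    have hA := step_nu x y ν hνmp r hrne ((ρ (cyl r)).toReal) ENNReal.toReal_nonneg
      (hSν r hrne)
    have hden : (0:ℝ) < 1 + (ν (cyl ([none] : List (Option A)))).toReal := by positivity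
    have hae : ∀ᵐ w ∂μ, Tendsto (fun n : ℕ => (occ r (wordOf w n) : ℝ) / (n : ℝ)) atTop
        (𝓝 ((ρ (cyl r)).toReal)) := by
      have h1 : ∀ᵐ w ∂μ, ∀ f : Fin r.length → Option A,
          Tendsto (fun n : ℕ => (occ (List.ofFn f) (pairSubst x y (wordOf w n)) : ℝ) /
            ((pairSubst x y (wordOf w n)).length : ℝ)) atTop
            (𝓝 ((ν (cyl (List.ofFn f))).toReal)) :=
        ae_all_iff.mpr fun f => hGμ (List.ofFn f) (by
          intro hc
          have hl := List.length_ofFn (f := f)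
          rw [hc] at hl
          simp at hl
          omega)
      have h2 := hGμ ([none] : List (Option A)) (by simp)
      filter_upwards [h1, h2] with w hw1 hw2
      have hlistlen : ∀ n : ℕ, n ≤ 2 * (pairSubst x y (wordOf w n)).length := by
        intro n
        have := length_le_two_mul_pairSubst x y (wordOf w n)
        rwa [length_wordOf] at this
      have hlen : Tendsto (fun n : ℕ => (pairSubst x y (wordOf w n)).length) atTop atTop := by
        rw [tendsto_atTop_atTop]
        intro b
        exact ⟨2 * b, fun n hn => by have := hlistlen n; omega⟩
      have hmain := tendsto_occ_ratio x y r hrne (fun n => pairSubst x y (wordOf w n)) hlen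
        (fun f => (ν (cyl (List.ofFn f))).toReal)
        ((ν (cyl ([none] : List (Option A)))).toReal)
        ENNReal.toReal_nonneg hw1 hw2
      have hlimval : (∑ f : Fin r.length → Option A, (gg x y r (List.ofFn f) : ℝ) *
          (ν (cyl (List.ofFn f))).toReal) /
            (1 + (ν (cyl ([none] : List (Option A)))).toReal)
          = (ρ (cyl r)).toReal := by
        rw [hA]
        exact mul_div_cancel_right₀ _ (ne_of_gt hden)
      rw [hlimval] at hmain
      have hfun : ∀ n : ℕ, (occ r (pairExpand x y (pairSubst x y (wordOf w n))) : ℝ) /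
          ((pairExpand x y (pairSubst x y (wordOf w n))).length : ℝ) =
          (occ r (wordOf w n) : ℝ) / (n : ℝ) := by
        intro n
        rw [pairExpand_pairSubst, length_wordOf]
      exact hmain.congr hfun
    have hB := step_mu μ hμmp r hrne ((ρ (cyl r)).toReal) hae
    exact ((ENNReal.toReal_eq_toReal_iff' (measure_ne_top μ _) (measure_ne_top ρ _)).mp hB).symm
  have hcyl_all : ∀ r : List A, ρ (cyl r) = μ (cyl r) := by
    intro r
    rcases eq_or_ne r [] with rfl | h
    · have huniv : cyl ([] : List A) = Set.univ := by
        ext w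
        simp [cyl]
      rw [huniv, measure_univ, measure_univ]
    · exact hcyl_eq r h
  exact measure_eq_of_cyl μ ρ hμmp hρmp hcyl_all
end

section
/- Let ℛμ ∈ ℰ(A_R) be the measure induced by R from μ ∈ ℰ(A), characterized by ℛμ(s) = lim_{n→∞} #{s ⊆ R(w_1…w_n)}/n for μ-a.e. w ∈ A^ℤ (note |R(w)| = |w|). Then h₁(ℛμ) ≤ h₁(μ), and more generally h_k(ℛμ) ≤ h_k(μ) for every k ≥ 1. -/
open MeasureTheory Filter Topology

/-- The map `R`: left-to-right non-overlapping substitution of the pair `x y` by the pair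
`x b₁`, where `b₁` is the new symbol `none`; it preserves the length of words. -/
def pairSubstR {A : Type*} [DecidableEq A] (x y : A) : List A → List (Option A)
  | [] => []
  | [a] => [some a]
  | a :: b :: l =>
      if a = x ∧ b = y then some x :: none :: pairSubstR x y l
      else some a :: pairSubstR x y (b :: l)

namespace NSPS
variable {A : Type*} [DecidableEq A] (x y : A)

def psi (y : A) : Option A → A := fun z => z.getD y

def G (x y : A) : Option A → A → Option A := fun z a => if z = some x ∧ a = y then none else some a

def RULE (x y : A) : Option A → Option A → Prop := fun p q => q = G x y p (psi y q)

def follow (x y : A) : Option A → List A → List (Option A)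
  | _, [] => []
  | c, a :: u => G x y c a :: follow x y (G x y c a) u

def zlast (x y : A) : Option A → List A → Option A
  | c, [] => c
  | c, a :: u => zlast x y (G x y c a) u

def zword (x y : A) (c : Option A) (u : List A) : List (Option A) := c :: follow x y c u

@[simp] lemma psi_G (c : Option A) (a : A) : psi y (G x y c a) = a := by
  unfold psi G; split <;> simp_all

lemma G_inj (c : Option A) : Function.Injective (G x y c) := by
  intro a b h
  have : psi y (G x y c a) = psi y (G x y c b) := by rw [h]
  simpa using this

@[simp] lemma map_psi_pairSubstR : ∀ l : List A, (pairSubstR x y l).map (psi y) = l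
  | [] => by simp [pairSubstR]
  | [a] => by simp [pairSubstR, psi]
  | a :: b :: l => by
      rw [pairSubstR]
      split
      · rename_i h
        simp [psi, map_psi_pairSubstR l, h.1, h.2]
      · simp [psi, map_psi_pairSubstR (b :: l)]

@[simp] lemma length_pairSubstR (l : List A) : (pairSubstR x y l).length = l.length := by
  rw [← List.length_map (as := pairSubstR x y l) (psi y), map_psi_pairSubstR]

lemma head_pairSubstR : ∀ (a : A) (l : List A), ∃ t, pairSubstR x y (a :: l) = some a :: t := by
  intro a l
  match l with
  | [] => exact ⟨[], rfl⟩
  | b :: l =>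
      rw [pairSubstR]
      split
      · rename_i h; exact ⟨none :: pairSubstR x y l, by rw [h.1]⟩
      · exact ⟨pairSubstR x y (b :: l), rfl⟩

lemma chain'_pairSubstR : ∀ l : List A, List.Chain' (RULE x y) (pairSubstR x y l)
  | [] => by simp [pairSubstR, List.Chain', List.isChain_nil]
  | [a] => by simp [pairSubstR, List.Chain', List.isChain_singleton]
  | a :: b :: l => by
      rw [pairSubstR]
      split
      · rename_i h
        have ih := chain'_pairSubstR l
        have h1 : RULE x y (some x) none := by simp [RULE, G, psi]
        match l with
        | [] => simp [pairSubstR, h1, List.Chain', List.isChain_pair]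
        | c :: l' =>
            obtain ⟨t, ht⟩ := head_pairSubstR x y c l'
            rw [ht] at ih ⊢
            refine List.isChain_cons_cons.mpr ⟨h1, List.isChain_cons_cons.mpr ⟨?_, ih⟩⟩
            simp [RULE, G, psi]
      · rename_i h
        have ih := chain'_pairSubstR (b :: l)
        obtain ⟨t, ht⟩ := head_pairSubstR x y b l
        rw [ht] at ih ⊢
        refine List.isChain_cons_cons.mpr ⟨?_, ih⟩
        simp only [RULE, G, psi, Option.getD_some]
        refine (if_neg ?_).symm
        simpa using h

lemma follow_prefix : ∀ (u : List A) (c : Option A) (t : List (Option A)),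
    List.Chain' (RULE x y) (c :: t) → (follow x y c u <+: t ↔ u <+: t.map (psi y))
  | [], _, _, _ => by simp [follow]
  | a :: u, c, [], _ => by
      simp only [follow, List.map_nil]
      constructor <;> (intro h; exact absurd h.length_le (by simp))
  | a :: u, c, z :: t, hch => by
      have hz : z = G x y c (psi y z) := (List.isChain_cons_cons.mp hch).1
      have htail : List.Chain' (RULE x y) (z :: t) := (List.isChain_cons_cons.mp hch).2
      simp only [follow, List.map_cons, List.cons_prefix_cons]
      constructor
      · rintro ⟨h1, h2⟩
        subst h1
        exact ⟨by simp, (follow_prefix u _ t htail).mp h2⟩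
      · rintro ⟨h1, h2⟩
        have hzz : z = G x y c a := by rw [hz, ← h1]
        refine ⟨hzz.symm, ?_⟩
        rw [← hzz]
        exact (follow_prefix u z t htail).mpr h2

end NSPS

namespace NSPS
variable {A : Type*} [DecidableEq A] (x y : A)

@[simp] lemma map_psi_follow : ∀ (u : List A) (c : Option A),
    (follow x y c u).map (psi y) = u
  | [], _ => rfl
  | a :: u, c => by simp [follow, map_psi_follow u]

@[simp] lemma length_follow (u : List A) (c : Option A) : (follow x y c u).length = u.length := by
  rw [← List.length_map (as := follow x y c u) (psi y), map_psi_follow]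

@[simp] lemma length_zword (u : List A) (c : Option A) : (zword x y c u).length = u.length + 1 := by
  simp [zword]

lemma chain'_zword : ∀ (u : List A) (c : Option A), List.Chain' (RULE x y) (zword x y c u)
  | [], _ => by simp [zword, follow, List.Chain', List.isChain_singleton]
  | a :: u, c => by
      have ih := chain'_zword u (G x y c a)
      simp only [zword, follow] at ih ⊢
      exact List.isChain_cons_cons.mpr ⟨by simp [RULE], ih⟩

lemma follow_append : ∀ (u : List A) (c : Option A) (a : A),
    follow x y c (u ++ [a]) = follow x y c u ++ [G x y (zlast x y c u) a]
  | [], c, a => by simp [follow, zlast]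
  | b :: u, c, a => by
      have h : (b :: u) ++ [a] = b :: (u ++ [a]) := rfl
      rw [h]
      show G x y c b :: follow x y (G x y c b) (u ++ [a]) = _
      rw [follow_append u]
      rfl

lemma getLast?_zword : ∀ (u : List A) (c : Option A),
    (zword x y c u).getLast? = some (zlast x y c u)
  | [], c => rfl
  | a :: u, c => by
      have := getLast?_zword u (G x y c a)
      simp only [zword, follow, zlast] at this ⊢
      rw [List.getLast?_cons_cons]
      simpa [zword] using this

lemma consistent_eq_follow : ∀ (t : List (Option A)) (c : Option A),
    List.Chain' (RULE x y) (c :: t) → follow x y c (t.map (psi y)) = t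
  | [], _, _ => rfl
  | z :: t, c, hch => by
      have hz : z = G x y c (psi y z) := (List.isChain_cons_cons.mp hch).1
      simp only [List.map_cons, follow, ← hz]
      rw [consistent_eq_follow t z (List.isChain_cons_cons.mp hch).2]

lemma zword_inj : Function.Injective (fun p : Option A × List A => zword x y p.1 p.2) := by
  rintro ⟨c, u⟩ ⟨c', u'⟩ h
  simp only [zword, List.cons.injEq] at h
  refine Prod.ext h.1 ?_
  have := congrArg (List.map (psi y)) h.2
  simpa using this

/-- countP over `List.range` as a `Finset.sum` of indicators. -/
lemma countP_range_eq_sum (p : ℕ → Prop) [DecidablePred p] : ∀ n : ℕ,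
    (List.range n).countP (fun i => decide (p i)) = ∑ i ∈ Finset.range n, if p i then 1 else 0
  | 0 => rfl
  | n + 1 => by
      rw [List.range_succ, List.countP_append, Finset.sum_range_succ, countP_range_eq_sum p n]
      simp [List.countP_cons]

lemma occ_eq_sum {B : Type*} [DecidableEq B] (s r : List B) :
    occ s r = ∑ i ∈ Finset.range r.length, if s <+: r.drop i then 1 else 0 :=
  countP_range_eq_sum _ _

lemma occ_eq_zero_of_not_chain' (s : List (Option A)) (hs : ¬ List.Chain' (RULE x y) s)
    (l : List A) : occ s (pairSubstR x y l) = 0 := by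
  rw [occ_eq_sum]
  refine Finset.sum_eq_zero fun i _ => ?_
  rw [if_neg]
  intro hpre
  exact hs ((chain'_pairSubstR x y l).infix (hpre.isInfix.trans (List.drop_suffix _ _).isInfix))

/-- Prefix characterisation of an occurrence of a `zword` inside `pairSubstR x y l`. -/
lemma zword_prefix_iff (l : List A) (c : Option A) (u : List A) (i : ℕ) (hi : i < l.length) :
    (zword x y c u <+: (pairSubstR x y l).drop i) ↔
      ((pairSubstR x y l)[i]'(by simpa using hi) = c ∧ u <+: l.drop (i + 1)) := by
  set r := pairSubstR x y l with hr
  have hir : i < r.length := by simpa [hr] using hi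
  rw [List.drop_eq_getElem_cons hir]
  have hch : List.Chain' (RULE x y) (r[i] :: r.drop (i + 1)) := by
    rw [← List.drop_eq_getElem_cons hir]
    exact (chain'_pairSubstR x y l).infix (List.drop_suffix _ _).isInfix
  rw [zword, List.cons_prefix_cons]
  constructor
  · rintro ⟨h1, h2⟩
    subst h1
    refine ⟨rfl, ?_⟩
    have := (follow_prefix x y u _ _ hch).mp h2
    rwa [List.map_drop, hr, map_psi_pairSubstR] at this
  · rintro ⟨h1, h2⟩
    subst h1
    refine ⟨rfl, (follow_prefix x y u _ _ hch).mpr ?_⟩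
    rw [List.map_drop, hr, map_psi_pairSubstR]
    exact h2

lemma cons_prefix_drop_iff (l : List A) (w1 : A) (u : List A) (i : ℕ) (hi : i < l.length) :
    ((w1 :: u) <+: l.drop i) ↔ (l[i] = w1 ∧ u <+: l.drop (i + 1)) := by
  rw [List.drop_eq_getElem_cons hi, List.cons_prefix_cons]
  tauto

/-- Key counting identity. -/
lemma sum_occ_zword [Fintype A] (l : List A) (w1 : A) (u : List A) :
    ∑ c ∈ Finset.univ.filter (fun c : Option A => psi y c = w1),
      occ (zword x y c u) (pairSubstR x y l) = occ (w1 :: u) l := by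
  classical
  have hlen : (pairSubstR x y l).length = l.length := length_pairSubstR x y l
  simp only [occ_eq_sum, hlen]
  rw [Finset.sum_comm]
  refine Finset.sum_congr rfl fun i hi => ?_
  have hi' : i < l.length := Finset.mem_range.mp hi
  simp only [cons_prefix_drop_iff l w1 u i hi']
  have : ∀ c : Option A, (zword x y c u <+: (pairSubstR x y l).drop i)
      ↔ ((pairSubstR x y l)[i]'(by simpa using hi') = c ∧ u <+: l.drop (i + 1)) :=
    fun c => zword_prefix_iff x y l c u i hi'
  simp only [this]
  have hh : i < ((pairSubstR x y l).map (psi y)).length := by simpa using hi'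
  have hpsi : psi y ((pairSubstR x y l)[i]'(by simpa using hi')) = l[i] := by
    rw [← List.getElem_of_eq (map_psi_pairSubstR x y l) hh, List.getElem_map]
  by_cases hca : l[i] = w1 ∧ u <+: l.drop (i + 1)
  · rw [if_pos hca]
    rw [Finset.sum_eq_single ((pairSubstR x y l)[i]'(by simpa using hi'))]
    · simp [hca.2]
    · intro b _ hb
      rw [if_neg]; tauto
    · intro hmem
      exfalso
      apply hmem
      simp [hpsi, hca.1]
  · rw [if_neg hca]
    refine Finset.sum_eq_zero fun c hc => ?_
    rw [if_neg]
    rintro ⟨h1, h2⟩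
    apply hca
    refine ⟨?_, h2⟩
    rw [← hpsi, h1]
    exact (Finset.mem_filter.mp hc).2

end NSPS


namespace NSPS

instance optionMSC {A : Type*} [MeasurableSpace A] [MeasurableSingletonClass A] :
    MeasurableSingletonClass (Option A) := by
  constructor
  intro z
  have hsing : ∀ s : A ⊕ Unit, MeasurableSet {s} := by
    intro s
    rw [measurableSet_sum_iff]
    cases s with
    | inl a =>
        constructor
        · convert measurableSet_singleton a using 1
          ext b; simp
        · convert MeasurableSet.empty using 1
          ext u; simp
    | inr u =>
        constructor
        · convert MeasurableSet.empty using 1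
          ext b; simp
        · convert measurableSet_singleton u using 1
          ext b; simp
  have key : ({z} : Set (Option A)) =
      (Option.elim' (Sum.inr ()) Sum.inl : Option A → A ⊕ Unit) ⁻¹'
        {Option.elim' (Sum.inr ()) Sum.inl z} := by
    ext w
    cases w <;> cases z <;> simp [Option.elim']
  rw [key]
  exact MeasurableSpace.measurableSet_comap.mpr ⟨_, hsing _, rfl⟩

section CylMeas
variable {B : Type*} [MeasurableSpace B] [MeasurableSingletonClass B]

lemma mem_cyl_iff {s : List B} {x : ℤ → B} :
    x ∈ cyl s ↔ ∀ i : ℕ, (h : i < s.length) → x (i : ℤ) = s[i] := by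
  constructor
  · intro hx i h; exact hx ⟨i, h⟩
  · intro hx i; exact hx i i.isLt

lemma measurableSet_cyl (s : List B) : MeasurableSet (cyl s) := by
  have : cyl s = ⋂ i : Fin s.length, (fun x : ℤ → B => x ((i : ℕ) : ℤ)) ⁻¹' {s.get i} := by
    ext x; simp [cyl]
  rw [this]
  exact MeasurableSet.iInter fun i => (measurable_pi_apply _) (measurableSet_singleton _)

lemma mem_cyl_append {s : List B} {b : B} {x : ℤ → B} :
    x ∈ cyl (s ++ [b]) ↔ x ∈ cyl s ∧ x ((s.length : ℕ) : ℤ) = b := by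
  simp only [mem_cyl_iff, List.length_append, List.length_singleton]
  constructor
  · intro h
    refine ⟨fun i hi => ?_, ?_⟩
    · have := h i (by omega)
      rwa [List.getElem_append_left hi] at this
    · have := h s.length (by omega)
      rwa [List.getElem_concat_length (l := s) (a := b) rfl] at this
  · rintro ⟨h1, h2⟩ i hi
    rcases Nat.lt_or_ge i s.length with h | h
    · rw [List.getElem_append_left h]; exact h1 i h
    · have hii : i = s.length := by omega
      subst hii
      rwa [List.getElem_concat_length (l := s) (a := b) rfl]

lemma cyl_append_subset (s : List B) (b : B) : cyl (s ++ [b]) ⊆ cyl s :=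
  fun _ hx => (mem_cyl_append.mp hx).1

lemma measure_cyl_sum [Fintype B] (ν : Measure (ℤ → B)) (s : List B) :
    ν (cyl s) = ∑ b : B, ν (cyl (s ++ [b])) := by
  classical
  have hU : (⋃ b : B, cyl (s ++ [b])) = cyl s := by
    ext w
    simp only [Set.mem_iUnion, mem_cyl_append]
    exact ⟨fun ⟨b, hb, _⟩ => hb, fun h => ⟨w ((s.length : ℕ) : ℤ), h, rfl⟩⟩
  have hdisj : Pairwise (Function.onFun Disjoint fun b : B => cyl (s ++ [b])) := by
    intro b b' hbb'
    simp only [Function.onFun]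
    rw [Set.disjoint_left]
    intro w hw hw'
    exact hbb' ((mem_cyl_append.mp hw).2.symm.trans (mem_cyl_append.mp hw').2)
  rw [← hU, measure_iUnion hdisj (fun b => measurableSet_cyl _), tsum_fintype]

end CylMeas
end NSPS

namespace NSPS
section Analytic
variable {B : Type*} [MeasurableSpace B] [MeasurableSingletonClass B] [DecidableEq B]

lemma flat_singleton {α β : Type*} (g : α → β) : ∀ l : List α,
    (l.flatMap fun a => [g a]) = l.map g
  | [] => rfl
  | a :: l => by rw [List.flatMap_cons, flat_singleton g l]; rfl

lemma wordOf_eq (w : ℤ → B) (n : ℕ) :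
    wordOf w n = (List.range n).map (fun i : ℕ => w (i : ℤ)) := by
  rw [wordOf]
  show List.map (fun i : ℤ => w i) ((List.range n).flatMap fun a => [((a : ℕ) : ℤ)]) = _
  rw [flat_singleton, List.map_map]
  rfl

lemma length_wordOf (w : ℤ → B) (n : ℕ) : (wordOf w n).length = n := by
  rw [wordOf_eq, List.length_map, List.length_range]

lemma getElem_wordOf (w : ℤ → B) (n i : ℕ) (h : i < n) :
    (wordOf w n)[i]'(by simpa [length_wordOf] using h) = w (i : ℤ) := by
  simp only [wordOf_eq, List.getElem_map, List.getElem_range]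

lemma prefix_wordOf_iff (v : List B) (hv : v ≠ []) (w : ℤ → B) (n i : ℕ) :
    (v <+: (wordOf w n).drop i) ↔
      (i + v.length ≤ n ∧ ∀ j, (h : j < v.length) → w ((i + j : ℕ) : ℤ) = v[j]) := by
  have hvl : 0 < v.length := List.length_pos_iff.mpr hv
  constructor
  · intro h
    have hlen : v.length ≤ n - i := by
      have := h.length_le
      simpa [List.length_drop, length_wordOf] using this
    have hh : i + v.length ≤ n ∨ n < i + v.length := le_or_gt _ _
    rcases hh with hh | hh
    · refine ⟨hh, fun j hj => ?_⟩
      have := List.IsPrefix.getElem h (i := j) (by simpa using hj)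
      rw [List.getElem_drop, getElem_wordOf w n (i + j) (by omega)] at this
      exact this.symm
    · exact absurd hlen (by omega)
  · rintro ⟨h1, h2⟩
    rw [List.prefix_iff_eq_take]
    apply List.ext_getElem
    · simp only [List.length_take, List.length_drop, length_wordOf]
      omega
    · intro j hj hj'
      rw [List.getElem_take, List.getElem_drop, getElem_wordOf w n (i + j) (by omega)]
      exact (h2 j hj).symm

lemma shift_iterate (i : ℕ) (w : ℤ → B) (t : ℤ) : (shift^[i] w) t = w (t + i) := by
  induction i generalizing w with
  | zero => simp
  | succ n ih =>
      rw [Function.iterate_succ_apply, ih (shift w)]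
      show w (t + n + 1) = _
      congr 1
      push_cast
      ring

lemma prefix_set_eq (v : List B) (hv : v ≠ []) (n i : ℕ) (hin : i + v.length ≤ n) :
    {w : ℤ → B | v <+: (wordOf w n).drop i} = (shift^[i]) ⁻¹' cyl v := by
  ext w
  simp only [Set.mem_setOf_eq, Set.mem_preimage, prefix_wordOf_iff v hv, mem_cyl_iff]
  constructor
  · rintro ⟨-, h⟩ j hj
    rw [shift_iterate]
    have := h j hj
    rwa [show ((j : ℤ) + i) = ((i + j : ℕ) : ℤ) by push_cast; ring]
  · intro h
    refine ⟨hin, fun j hj => ?_⟩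
    have := h j hj
    rw [shift_iterate] at this
    rwa [show ((i + j : ℕ) : ℤ) = ((j : ℤ) + i) by push_cast; ring]

lemma prefix_set_empty (v : List B) (hv : v ≠ []) (n i : ℕ) (hin : n < i + v.length) :
    {w : ℤ → B | v <+: (wordOf w n).drop i} = ∅ := by
  have hvl : 0 < v.length := List.length_pos_iff.mpr hv
  ext w
  simp only [Set.mem_setOf_eq, Set.mem_empty_iff_false, iff_false]
  intro h
  have := h.length_le
  simp only [List.length_drop, length_wordOf] at this
  omega

lemma measurableSet_prefix_set (v : List B) (n i : ℕ) :
    MeasurableSet {w : ℤ → B | v <+: (wordOf w n).drop i} := by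
  rcases eq_or_ne v [] with hv | hv
  · subst hv
    have : {w : ℤ → B | [] <+: (wordOf w n).drop i} = Set.univ := by
      ext w; simp
    rw [this]; exact MeasurableSet.univ
  rcases le_or_gt (i + v.length) n with h | h
  · rw [prefix_set_eq v hv n i h]
    exact (Measurable.iterate (by
      apply measurable_pi_lambda
      intro t
      exact measurable_pi_apply _) i) (measurableSet_cyl v)
  · rw [prefix_set_empty v hv n i h]
    exact MeasurableSet.empty

lemma occ_wordOf_cast (v : List B) (w : ℤ → B) (n : ℕ) :
    ((occ v (wordOf w n) : ℝ)) =
      ∑ i ∈ Finset.range n, Set.indicator {w : ℤ → B | v <+: (wordOf w n).drop i}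
        (fun _ => (1 : ℝ)) w := by
  rw [occ_eq_sum, length_wordOf]
  push_cast
  refine Finset.sum_congr rfl fun i _ => ?_
  rw [Set.indicator_apply]
  simp only [Set.mem_setOf_eq]

lemma measurable_occ_div (v : List B) (n : ℕ) :
    Measurable (fun w : ℤ → B => (occ v (wordOf w n) : ℝ) / n) := by
  apply Measurable.div_const
  have : (fun w : ℤ → B => (occ v (wordOf w n) : ℝ)) =
      fun w => ∑ i ∈ Finset.range n, Set.indicator
        {w : ℤ → B | v <+: (wordOf w n).drop i} (fun _ => (1 : ℝ)) w := by
    funext w; exact occ_wordOf_cast v w n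
  rw [this]
  exact Finset.measurable_sum _ fun i _ =>
    (measurable_const.indicator (measurableSet_prefix_set v n i))

lemma occ_div_nonneg (v : List B) (w : ℤ → B) (n : ℕ) :
    0 ≤ (occ v (wordOf w n) : ℝ) / n := by positivity

lemma occ_div_le_one (v : List B) (w : ℤ → B) (n : ℕ) :
    (occ v (wordOf w n) : ℝ) / n ≤ 1 := by
  rcases Nat.eq_zero_or_pos n with h | h
  · simp [h]
  · rw [div_le_one (by positivity)]
    have : occ v (wordOf w n) ≤ n := by
      have := List.countP_le_length (l := List.range (wordOf w n).length)
        (p := fun i => decide (v <+: (wordOf w n).drop i))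
      simpa [occ, length_wordOf] using this
    exact_mod_cast this

end Analytic
end NSPS

namespace NSPS
section Limits
variable {B : Type*} [MeasurableSpace B] [MeasurableSingletonClass B] [DecidableEq B]

lemma integral_occ_div (ν : Measure (ℤ → B)) [IsProbabilityMeasure ν]
    (hν : MeasurePreserving shift ν ν) (v : List B) (hv : v ≠ []) (n : ℕ) (hn : v.length ≤ n) :
    ∫ w, (occ v (wordOf w n) : ℝ) / n ∂ν
      = ((n + 1 - v.length : ℕ) : ℝ) / n * (ν (cyl v)).toReal := by
  have hvl : 0 < v.length := List.length_pos_iff.mpr hv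
  have hmeas : ∀ i, MeasurableSet {w : ℤ → B | v <+: (wordOf w n).drop i} :=
    fun i => measurableSet_prefix_set v n i
  have hint : ∀ i ∈ Finset.range n, Integrable
      (fun w => Set.indicator {w : ℤ → B | v <+: (wordOf w n).drop i} (fun _ => (1:ℝ)) w) ν :=
    fun i _ => (integrable_const (1:ℝ)).indicator (hmeas i)
  calc ∫ w, (occ v (wordOf w n) : ℝ) / n ∂ν
      = (∫ w, (occ v (wordOf w n) : ℝ) ∂ν) / n := integral_div _ _
    _ = (∑ i ∈ Finset.range n,
          (ν {w : ℤ → B | v <+: (wordOf w n).drop i}).toReal) / n := by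
        congr 1
        rw [show (fun w => (occ v (wordOf w n) : ℝ)) = fun w => ∑ i ∈ Finset.range n,
          Set.indicator {w : ℤ → B | v <+: (wordOf w n).drop i} (fun _ => (1:ℝ)) w from
            funext fun w => occ_wordOf_cast v w n]
        rw [integral_finset_sum _ hint]
        refine Finset.sum_congr rfl fun i _ => ?_
        rw [integral_indicator_const (1:ℝ) (hmeas i)]
        simp; rfl
    _ = ((n + 1 - v.length : ℕ) : ℝ) / n * (ν (cyl v)).toReal := by
        have hval : ∀ i ∈ Finset.range n,
            (ν {w : ℤ → B | v <+: (wordOf w n).drop i}).toReal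
              = if i + v.length ≤ n then (ν (cyl v)).toReal else 0 := by
          intro i _
          split
          · rename_i h
            rw [prefix_set_eq v hv n i h,
              (hν.iterate i).measure_preimage (measurableSet_cyl v).nullMeasurableSet]
          · rename_i h
            rw [prefix_set_empty v hv n i (by omega)]
            simp
        rw [Finset.sum_congr rfl hval, Finset.sum_ite, Finset.sum_const, Finset.sum_const_zero,
          add_zero]
        have hfilt : (Finset.range n).filter (fun i => i + v.length ≤ n)
            = Finset.range (n + 1 - v.length) := by
          ext i
          simp only [Finset.mem_filter, Finset.mem_range]
          omega
        rw [hfilt, Finset.card_range, nsmul_eq_mul]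
        ring

lemma tendsto_integral_occ_div (ν : Measure (ℤ → B)) [IsProbabilityMeasure ν]
    (hν : MeasurePreserving shift ν ν) (v : List B) (hv : v ≠ []) :
    Tendsto (fun n : ℕ => ∫ w, (occ v (wordOf w n) : ℝ) / n ∂ν) atTop
      (𝓝 ((ν (cyl v)).toReal)) := by
  have hvl : 0 < v.length := List.length_pos_iff.mpr hv
  have h0 : Tendsto (fun n : ℕ => ((1:ℝ) - v.length) / n) atTop (𝓝 0) :=
    tendsto_const_div_atTop_nhds_zero_nat _
  have h1 : Tendsto (fun n : ℕ => 1 + ((1:ℝ) - v.length) / n) atTop (𝓝 1) := by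
    simpa using tendsto_const_nhds.add h0
  have h2 : Tendsto (fun n : ℕ => ((n + 1 - v.length : ℕ) : ℝ) / n) atTop (𝓝 1) := by
    refine Tendsto.congr' ?_ h1
    filter_upwards [eventually_ge_atTop (max 1 v.length)] with n hn
    have hn1 : 1 ≤ n := le_of_max_le_left hn
    have hnv : v.length ≤ n := le_of_max_le_right hn
    have hne : (n : ℝ) ≠ 0 := by positivity
    rw [Nat.cast_sub (by omega)]
    push_cast
    field_simp
    ring
  have h3 := h2.mul_const ((ν (cyl v)).toReal)
  rw [one_mul] at h3
  refine Tendsto.congr' ?_ h3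
  filter_upwards [eventually_ge_atTop v.length] with n hn
  exact (integral_occ_div ν hν v hv n hn).symm

lemma ae_tendsto_occ_eq (ν : Measure (ℤ → B)) [IsProbabilityMeasure ν]
    (hν : MeasurePreserving shift ν ν) (v : List B) (hv : v ≠ []) (c : ℝ)
    (h : ∀ᵐ w ∂ν, Tendsto (fun n : ℕ => (occ v (wordOf w n) : ℝ) / n) atTop (𝓝 c)) :
    c = (ν (cyl v)).toReal := by
  have hDCT := tendsto_integral_of_dominated_convergence (μ := ν)
      (F := fun n w => (occ v (wordOf w n) : ℝ) / n) (f := fun _ => c) (bound := fun _ => 1)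
      (fun n => (measurable_occ_div v n).aestronglyMeasurable)
      (integrable_const 1)
      (fun n => ae_of_all _ fun w => by
        rw [Real.norm_eq_abs, abs_of_nonneg (occ_div_nonneg v w n)]
        exact occ_div_le_one v w n)
      h
  simp only [integral_const, measure_univ, ENNReal.toReal_one, probReal_univ, one_smul] at hDCT
  exact tendsto_nhds_unique hDCT (tendsto_integral_occ_div ν hν v hv)

end Limits

section Main
variable {A : Type*} [Fintype A] [DecidableEq A] [MeasurableSpace A]
  [MeasurableSingletonClass A] (x y : A)
variable (μ : Measure (ℤ → A)) [IsProbabilityMeasure μ]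
variable (ξ : Measure (ℤ → Option A)) [IsProbabilityMeasure ξ]

lemma xi_vanish
    (hRμ : ∀ s : List (Option A), s ≠ [] →
      ∀ᵐ w ∂μ, Tendsto (fun n : ℕ => (occ s (pairSubstR x y (wordOf w n)) : ℝ) / (n : ℝ))
        atTop (𝓝 ((ξ (cyl s)).toReal)))
    (s : List (Option A)) (hs : ¬ List.Chain' (RULE x y) s) : ξ (cyl s) = 0 := by
  have hne : s ≠ [] := by rintro rfl; exact hs List.isChain_nil
  haveI : (MeasureTheory.ae μ).NeBot := ae_neBot.mpr (IsProbabilityMeasure.ne_zero μ)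
  obtain ⟨w, hw⟩ := (hRμ s hne).exists
  have hz : Tendsto (fun _ : ℕ => (0:ℝ)) atTop (𝓝 ((ξ (cyl s)).toReal)) := by
    refine hw.congr fun n => ?_
    rw [occ_eq_zero_of_not_chain' x y s hs (wordOf w n)]
    simp
  have h0 : (ξ (cyl s)).toReal = 0 := tendsto_nhds_unique hz tendsto_const_nhds
  exact ((ENNReal.toReal_eq_zero_iff _).mp h0).resolve_right (measure_ne_top ξ _)

lemma qsum
    (hRμ : ∀ s : List (Option A), s ≠ [] →
      ∀ᵐ w ∂μ, Tendsto (fun n : ℕ => (occ s (pairSubstR x y (wordOf w n)) : ℝ) / (n : ℝ))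
        atTop (𝓝 ((ξ (cyl s)).toReal)))
    (hμshift : MeasurePreserving shift μ μ) (w1 : A) (u : List A) :
    ∑ c ∈ Finset.univ.filter (fun c : Option A => psi y c = w1),
        (ξ (cyl (zword x y c u))).toReal
      = (μ (cyl (w1 :: u))).toReal := by
  have hae : ∀ᵐ w ∂μ, ∀ c : Option A,
      Tendsto (fun n : ℕ => (occ (zword x y c u) (pairSubstR x y (wordOf w n)) : ℝ) / n)
        atTop (𝓝 ((ξ (cyl (zword x y c u))).toReal)) := by
    rw [ae_all_iff]
    intro c
    exact hRμ _ (by simp [zword])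
  have hae2 : ∀ᵐ w ∂μ, Tendsto (fun n : ℕ => (occ (w1 :: u) (wordOf w n) : ℝ) / n) atTop
      (𝓝 (∑ c ∈ Finset.univ.filter (fun c : Option A => psi y c = w1),
        (ξ (cyl (zword x y c u))).toReal)) := by
    filter_upwards [hae] with w hw
    have hsum := tendsto_finset_sum
      (Finset.univ.filter (fun c : Option A => psi y c = w1)) (fun c _ => hw c)
    refine hsum.congr fun n => ?_
    rw [← Finset.sum_div, ← Nat.cast_sum, sum_occ_zword x y (wordOf w n) w1 u]
  exact ae_tendsto_occ_eq μ hμshift (w1 :: u) (by simp) _ hae2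

lemma zword_append (c : Option A) (u : List A) (a : A) :
    zword x y c (u ++ [a]) = zword x y c u ++ [G x y (zlast x y c u) a] := by
  simp only [zword, follow_append, List.cons_append]

lemma qadd
    (hRμ : ∀ s : List (Option A), s ≠ [] →
      ∀ᵐ w ∂μ, Tendsto (fun n : ℕ => (occ s (pairSubstR x y (wordOf w n)) : ℝ) / (n : ℝ))
        atTop (𝓝 ((ξ (cyl s)).toReal)))
    (c : Option A) (u : List A) :
    ∑ a : A, (ξ (cyl (zword x y c (u ++ [a])))).toReal = (ξ (cyl (zword x y c u))).toReal := by
  rw [show ξ (cyl (zword x y c u)) = ∑ z' : Option A, ξ (cyl (zword x y c u ++ [z'])) from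
    measure_cyl_sum ξ _, ENNReal.toReal_sum (fun _ _ => measure_ne_top ξ _)]
  simp_rw [zword_append x y c u]
  have himg := Finset.sum_image (s := (Finset.univ : Finset A))
      (f := fun z' : Option A => (ξ (cyl (zword x y c u ++ [z']))).toReal)
      (g := G x y (zlast x y c u))
      (fun a _ b _ h => G_inj x y (zlast x y c u) h)
  rw [show (Finset.univ : Finset A).sum
        (fun a => (ξ (cyl (zword x y c u ++ [G x y (zlast x y c u) a]))).toReal)
      = ∑ z' ∈ Finset.univ.image (G x y (zlast x y c u)),
          (ξ (cyl (zword x y c u ++ [z']))).toReal from himg.symm]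
  refine Finset.sum_subset (Finset.subset_univ _) ?_
  intro z' _ hz'
  have hnc : ¬ List.Chain' (RULE x y) (zword x y c u ++ [z']) := by
    intro hch
    rcases List.isChain_append.mp hch with ⟨-, -, h3⟩
    have := h3 (zlast x y c u) (by rw [getLast?_zword]; rfl) z' rfl
    apply hz'
    refine Finset.mem_image.mpr ⟨psi y z', Finset.mem_univ _, ?_⟩
    exact this.symm
  rw [xi_vanish x y μ ξ hRμ _ hnc]
  simp

lemma padd {B : Type*} [Fintype B] [MeasurableSpace B] [MeasurableSingletonClass B]
    (ν : Measure (ℤ → B)) [IsProbabilityMeasure ν] (u : List B) :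
    ∑ b : B, (ν (cyl (u ++ [b]))).toReal = (ν (cyl u)).toReal := by
  rw [show ν (cyl u) = ∑ b : B, ν (cyl (u ++ [b])) from measure_cyl_sum ν u,
    ENNReal.toReal_sum (fun _ _ => measure_ne_top ν _)]

lemma cyl_mono {B : Type*} [MeasurableSpace B] [MeasurableSingletonClass B]
    (ν : Measure (ℤ → B)) [IsProbabilityMeasure ν]
    (u : List B) (b : B) : (ν (cyl (u ++ [b]))).toReal ≤ (ν (cyl u)).toReal :=
  ENNReal.toReal_mono (measure_ne_top ν _) (measure_mono (cyl_append_subset u b))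

end Main
end NSPS

namespace NSPS

lemma log_sum_ineq {ι : Type*} (S : Finset ι) (a b : ι → ℝ)
    (h0 : ∀ i ∈ S, 0 ≤ a i) (hab : ∀ i ∈ S, a i ≤ b i) :
    ∑ i ∈ S, (a i * Real.log (b i) - a i * Real.log (a i)) ≤
      (∑ i ∈ S, a i) * Real.log (∑ i ∈ S, b i)
        - (∑ i ∈ S, a i) * Real.log (∑ i ∈ S, a i) := by
  set SA := ∑ i ∈ S, a i with hSAdef
  set SB := ∑ i ∈ S, b i with hSBdef
  have hSA0 : 0 ≤ SA := Finset.sum_nonneg h0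
  have hb0 : ∀ i ∈ S, 0 ≤ b i := fun i hi => (h0 i hi).trans (hab i hi)
  have hSAB : SA ≤ SB := Finset.sum_le_sum hab
  rcases eq_or_lt_of_le hSA0 with hSA | hSA
  · have hz : ∀ i ∈ S, a i = 0 :=
      (Finset.sum_eq_zero_iff_of_nonneg h0).mp hSA.symm
    have hL : ∑ i ∈ S, (a i * Real.log (b i) - a i * Real.log (a i)) = 0 :=
      Finset.sum_eq_zero fun i hi => by rw [hz i hi]; ring
    rw [hL, ← hSA]
    simp
  · have hSB : 0 < SB := lt_of_lt_of_le hSA hSAB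
    have key : ∀ i ∈ S, a i * Real.log (b i) - a i * Real.log (a i)
        ≤ (a i * Real.log SB - a i * Real.log SA) + (b i * (SA / SB) - a i) := by
      intro i hi
      rcases eq_or_lt_of_le (h0 i hi) with ha | ha
      · rw [← ha]
        have : 0 ≤ b i * (SA / SB) := mul_nonneg (hb0 i hi) (div_nonneg hSA0 hSB.le)
        simp only [zero_mul, sub_zero, zero_sub, neg_zero, sub_self]
        linarith
      · have hbi : 0 < b i := lt_of_lt_of_le ha (hab i hi)
        have hlog : Real.log (b i) - Real.log (a i) - (Real.log SB - Real.log SA)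
            ≤ (b i * SA) / (a i * SB) - 1 := by
          have h1 : 0 < (b i * SA) / (a i * SB) := by positivity
          have h2 := Real.log_le_sub_one_of_pos h1
          rw [Real.log_div (by positivity) (by positivity),
            Real.log_mul (ne_of_gt hbi) (ne_of_gt hSA),
            Real.log_mul (ne_of_gt ha) (ne_of_gt hSB)] at h2
          linarith
        calc a i * Real.log (b i) - a i * Real.log (a i)
            = a i * (Real.log (b i) - Real.log (a i) - (Real.log SB - Real.log SA))
                + (a i * Real.log SB - a i * Real.log SA) := by ring
          _ ≤ a i * ((b i * SA) / (a i * SB) - 1)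
                + (a i * Real.log SB - a i * Real.log SA) := by
              have := mul_le_mul_of_nonneg_left hlog ha.le
              linarith
          _ = (a i * Real.log SB - a i * Real.log SA) + (b i * (SA / SB) - a i) := by
              field_simp
              ring
    have hsum := Finset.sum_le_sum key
    have heq : ∑ i ∈ S, ((a i * Real.log SB - a i * Real.log SA) + (b i * (SA / SB) - a i))
        = SA * Real.log SB - SA * Real.log SA := by
      rw [Finset.sum_add_distrib, Finset.sum_sub_distrib, Finset.sum_sub_distrib,
        ← Finset.sum_mul, ← Finset.sum_mul, ← Finset.sum_mul, ← hSAdef, ← hSBdef]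
      have : SB * (SA / SB) = SA := by field_simp
      rw [this]
      ring
    linarith

lemma logb_sum_ineq {ι : Type*} (S : Finset ι) (a b : ι → ℝ)
    (h0 : ∀ i ∈ S, 0 ≤ a i) (hab : ∀ i ∈ S, a i ≤ b i) :
    ∑ i ∈ S, (a i * Real.logb 2 (b i) - a i * Real.logb 2 (a i)) ≤
      (∑ i ∈ S, a i) * Real.logb 2 (∑ i ∈ S, b i)
        - (∑ i ∈ S, a i) * Real.logb 2 (∑ i ∈ S, a i) := by
  have hlog2 : (0:ℝ) < Real.log 2 := Real.log_pos one_lt_two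
  have h2 : ∀ t u : ℝ, t * Real.logb 2 u = (t * Real.log u) / Real.log 2 := by
    intro t u; rw [Real.logb]; ring
  simp only [h2, ← sub_div, ← Finset.sum_div]
  gcongr
  exact log_sum_ineq S a b h0 hab

lemma blockH_eq {B : Type*} [Fintype B] [MeasurableSpace B] (ν : Measure (ℤ → B)) (n : ℕ) :
    blockH ν n = -∑ z : Fin n → B,
      ((ν (cyl (List.ofFn z))).toReal * Real.logb 2 ((ν (cyl (List.ofFn z))).toReal)) := by
  unfold blockH
  congr 1
  refine Finset.sum_congr rfl fun z _ => ?_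
  have hset : {x : ℤ → B | ∀ i : Fin n, x ((i : ℕ) : ℤ) = z i} = cyl (List.ofFn z) := by
    ext w
    constructor
    · intro h i
      rw [List.get_ofFn]
      have := h (Fin.cast (List.length_ofFn (f := z)) i)
      simpa using this
    · intro h i
      have := h (Fin.cast (List.length_ofFn (f := z)).symm i)
      rw [List.get_ofFn] at this
      simpa using this
  rw [hset]

def snocEquiv (B : Type*) (j : ℕ) : ((Fin j → B) × B) ≃ (Fin (j+1) → B) where
  toFun p := Fin.snoc p.1 p.2
  invFun v := (fun i => v i.castSucc, v (Fin.last j))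
  left_inv := by
    rintro ⟨u, a⟩
    refine Prod.ext ?_ ?_ <;> simp
  right_inv := by
    intro v
    funext i
    refine Fin.lastCases ?_ ?_ i <;> simp

lemma ofFn_snoc {B : Type*} {j : ℕ} (u : Fin j → B) (a : B) :
    List.ofFn (Fin.snoc u a : Fin (j+1) → B) = List.ofFn u ++ [a] := by
  rw [List.ofFn_succ']
  simp only [Fin.snoc_castSucc, Fin.snoc_last, List.concat_eq_append]

lemma sum_snoc {B : Type*} [Fintype B] [DecidableEq B] (j : ℕ) (F : List B → ℝ) :
    ∑ v : Fin (j+1) → B, F (List.ofFn v) = ∑ u : Fin j → B, ∑ a : B, F (List.ofFn u ++ [a]) := by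
  rw [← Equiv.sum_comp (snocEquiv B j) (fun v => F (List.ofFn v)), Fintype.sum_prod_type]
  refine Finset.sum_congr rfl fun u _ => Finset.sum_congr rfl fun a _ => ?_
  simp only [snocEquiv, Equiv.coe_fn_mk, ofFn_snoc]

lemma sum_cons {B : Type*} [Fintype B] [DecidableEq B] (j : ℕ) (F : List B → ℝ) :
    ∑ v : Fin (j+1) → B, F (List.ofFn v) = ∑ b : B, ∑ u : Fin j → B, F (b :: List.ofFn u) := by
  rw [← Equiv.sum_comp (Fin.consEquiv (fun _ : Fin (j+1) => B)) (fun v => F (List.ofFn v)),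
    Fintype.sum_prod_type]
  refine Finset.sum_congr rfl fun b _ => Finset.sum_congr rfl fun u _ => ?_
  simp only [Fin.consEquiv, Equiv.coe_fn_mk, List.ofFn_succ, Fin.cons_succ, Fin.cons_zero]

lemma ofFn_get_cast {β : Type*} (l : List β) (m : ℕ) (h : m = l.length) :
    List.ofFn (fun i : Fin m => l.get (Fin.cast h i)) = l := by
  subst h
  simp only [Fin.cast_refl]
  exact List.ofFn_get l

end NSPS

namespace NSPS
section Final
variable {A : Type*} [Fintype A] [DecidableEq A] [MeasurableSpace A]
  [MeasurableSingletonClass A] (x y : A)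
variable (μ : Measure (ℤ → A)) [IsProbabilityMeasure μ]
variable (ξ : Measure (ℤ → Option A)) [IsProbabilityMeasure ξ]

def zfun (j : ℕ) (c : Option A) (u : Fin j → A) : Fin (j+1) → Option A :=
  fun i => (zword x y c (List.ofFn u)).get (Fin.cast (by simp) i)

lemma ofFn_zfun (j : ℕ) (c : Option A) (u : Fin j → A) :
    List.ofFn (zfun x y j c u) = zword x y c (List.ofFn u) :=
  ofFn_get_cast _ _ _

lemma sum_zword
    (hRμ : ∀ s : List (Option A), s ≠ [] →
      ∀ᵐ w ∂μ, Tendsto (fun n : ℕ => (occ s (pairSubstR x y (wordOf w n)) : ℝ) / (n : ℝ))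
        atTop (𝓝 ((ξ (cyl s)).toReal)))
    (j : ℕ) (F : List (Option A) → ℝ)
    (hF : ∀ s : List (Option A), ξ (cyl s) = 0 → F s = 0) :
    ∑ z : Fin (j+1) → Option A, F (List.ofFn z)
      = ∑ c : Option A, ∑ u : Fin j → A, F (zword x y c (List.ofFn u)) := by
  classical
  rw [← Fintype.sum_prod_type' (fun c u => F (zword x y c (List.ofFn u)))]
  symm
  refine Finset.sum_bij_ne_zero
    (i := fun (p : Option A × (Fin j → A)) _ _ => zfun x y j p.1 p.2)
    (fun p _ _ => Finset.mem_univ _) ?_ ?_ ?_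
  · rintro ⟨c1, u1⟩ h11 h12 ⟨c2, u2⟩ h21 h22 h
    have h' : zfun x y j c1 u1 = zfun x y j c2 u2 := h
    have h2 : zword x y c1 (List.ofFn u1) = zword x y c2 (List.ofFn u2) := by
      rw [← ofFn_zfun, ← ofFn_zfun, h']
    have h3 : ((c1, List.ofFn u1) : Option A × List A) = (c2, List.ofFn u2) :=
      zword_inj x y h2
    have hc : c1 = c2 := congrArg Prod.fst h3
    have hu : List.ofFn u1 = List.ofFn u2 := congrArg Prod.snd h3
    exact Prod.ext hc (List.ofFn_injective hu)
  · rintro z - hz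
    have hξ : ξ (cyl (List.ofFn z)) ≠ 0 := fun h => hz (hF _ h)
    have hch : List.Chain' (RULE x y) (List.ofFn z) := by
      by_contra hnc
      exact hξ (xi_vanish x y μ ξ hRμ _ hnc)
    have hch' : List.Chain' (RULE x y) (z 0 :: List.ofFn (fun i : Fin j => z i.succ)) := by
      rwa [List.ofFn_succ] at hch
    have hkey : zword x y (z 0) (List.ofFn (fun i : Fin j => psi y (z i.succ)))
        = List.ofFn z := by
      have hmap : (List.ofFn (fun i : Fin j => z i.succ)).map (psi y)
          = List.ofFn (fun i : Fin j => psi y (z i.succ)) := by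
        rw [List.map_ofFn]; rfl
      have := consistent_eq_follow x y (List.ofFn (fun i : Fin j => z i.succ)) (z 0) hch'
      rw [hmap] at this
      rw [zword, this, ← List.ofFn_succ]
    refine ⟨(z 0, fun i : Fin j => psi y (z i.succ)), Finset.mem_univ _, ?_, ?_⟩
    · show F (zword x y (z 0) (List.ofFn fun i => psi y (z i.succ))) ≠ 0
      rw [hkey]; exact hz
    · apply List.ofFn_injective
      rw [ofFn_zfun, hkey]
  · rintro ⟨c, u⟩ h1 h2
    exact (congrArg F (ofFn_zfun x y j c u)).symm

lemma blockH_xi_eq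
    (hRμ : ∀ s : List (Option A), s ≠ [] →
      ∀ᵐ w ∂μ, Tendsto (fun n : ℕ => (occ s (pairSubstR x y (wordOf w n)) : ℝ) / (n : ℝ))
        atTop (𝓝 ((ξ (cyl s)).toReal)))
    (j : ℕ) :
    blockH ξ (j+1) = -∑ c : Option A, ∑ u : Fin j → A,
      ((ξ (cyl (zword x y c (List.ofFn u)))).toReal
        * Real.logb 2 ((ξ (cyl (zword x y c (List.ofFn u)))).toReal)) := by
  rw [blockH_eq]
  congr 1
  exact sum_zword x y μ ξ hRμ j
    (fun l => (ξ (cyl l)).toReal * Real.logb 2 ((ξ (cyl l)).toReal))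
    (fun s hs => by
      show (ξ (cyl s)).toReal * Real.logb 2 ((ξ (cyl s)).toReal) = 0
      rw [hs]; simp)

lemma hk_le
    (hRμ : ∀ s : List (Option A), s ≠ [] →
      ∀ᵐ w ∂μ, Tendsto (fun n : ℕ => (occ s (pairSubstR x y (wordOf w n)) : ℝ) / (n : ℝ))
        atTop (𝓝 ((ξ (cyl s)).toReal)))
    (hμshift : MeasurePreserving shift μ μ) (j : ℕ) :
    blockH ξ (j + 1 + 1) - blockH ξ (j + 1) ≤ blockH μ (j + 1 + 1) - blockH μ (j + 1) := by
  classical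
  have hXi2 : blockH ξ (j + 1 + 1)
      = -∑ c : Option A, ∑ u : Fin j → A, ∑ a : A,
          ((ξ (cyl (zword x y c (List.ofFn u ++ [a])))).toReal
            * Real.logb 2 ((ξ (cyl (zword x y c (List.ofFn u ++ [a])))).toReal)) := by
    rw [blockH_xi_eq x y μ ξ hRμ (j+1)]
    congr 1
    refine Finset.sum_congr rfl fun c _ => ?_
    exact sum_snoc j (fun l => (ξ (cyl (zword x y c l))).toReal
      * Real.logb 2 ((ξ (cyl (zword x y c l))).toReal))
  have hXi1 := blockH_xi_eq x y μ ξ hRμ j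
  have hMu2 : blockH μ (j + 1 + 1)
      = -∑ w1 : A, ∑ u : Fin j → A, ∑ a : A,
          ((μ (cyl (w1 :: (List.ofFn u ++ [a])))).toReal
            * Real.logb 2 ((μ (cyl (w1 :: (List.ofFn u ++ [a])))).toReal)) := by
    rw [blockH_eq]
    congr 1
    rw [sum_cons (j+1) (fun l => (μ (cyl l)).toReal * Real.logb 2 ((μ (cyl l)).toReal))]
    refine Finset.sum_congr rfl fun w1 _ => ?_
    exact sum_snoc j (fun l => (μ (cyl (w1 :: l))).toReal
      * Real.logb 2 ((μ (cyl (w1 :: l))).toReal))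
  have hMu1 : blockH μ (j + 1)
      = -∑ w1 : A, ∑ u : Fin j → A,
          ((μ (cyl (w1 :: List.ofFn u))).toReal
            * Real.logb 2 ((μ (cyl (w1 :: List.ofFn u))).toReal)) := by
    rw [blockH_eq]
    congr 1
    exact sum_cons j (fun l => (μ (cyl l)).toReal * Real.logb 2 ((μ (cyl l)).toReal))
  rw [hXi2, hXi1, hMu2, hMu1]
  have hneg : ∀ X Y : ℝ, -X - (-Y) = Y - X := by intro X Y; ring
  rw [hneg, hneg]
  have hqsplit : ∀ (c : Option A) (u : Fin j → A),
      (ξ (cyl (zword x y c (List.ofFn u)))).toReal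
          * Real.logb 2 ((ξ (cyl (zword x y c (List.ofFn u)))).toReal)
        = ∑ a : A, (ξ (cyl (zword x y c (List.ofFn u ++ [a])))).toReal
            * Real.logb 2 ((ξ (cyl (zword x y c (List.ofFn u)))).toReal) := by
    intro c u
    rw [← Finset.sum_mul, qadd x y μ ξ hRμ c (List.ofFn u)]
  have hpsplit : ∀ (w1 : A) (u : Fin j → A),
      (μ (cyl (w1 :: List.ofFn u))).toReal
          * Real.logb 2 ((μ (cyl (w1 :: List.ofFn u))).toReal)
        = ∑ a : A, (μ (cyl (w1 :: (List.ofFn u ++ [a])))).toReal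
            * Real.logb 2 ((μ (cyl (w1 :: List.ofFn u))).toReal) := by
    intro w1 u
    have := padd μ (w1 :: List.ofFn u)
    rw [← Finset.sum_mul]
    rw [show (∑ a : A, (μ (cyl (w1 :: (List.ofFn u ++ [a])))).toReal)
      = ∑ a : A, (μ (cyl ((w1 :: List.ofFn u) ++ [a]))).toReal from rfl, this]
  have hLxi : (∑ c : Option A, ∑ u : Fin j → A,
        ((ξ (cyl (zword x y c (List.ofFn u)))).toReal
          * Real.logb 2 ((ξ (cyl (zword x y c (List.ofFn u)))).toReal)))
      - (∑ c : Option A, ∑ u : Fin j → A, ∑ a : A,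
          ((ξ (cyl (zword x y c (List.ofFn u ++ [a])))).toReal
            * Real.logb 2 ((ξ (cyl (zword x y c (List.ofFn u ++ [a])))).toReal)))
      = ∑ u : Fin j → A, ∑ a : A, ∑ c : Option A,
          ((ξ (cyl (zword x y c (List.ofFn u ++ [a])))).toReal
              * Real.logb 2 ((ξ (cyl (zword x y c (List.ofFn u)))).toReal)
            - (ξ (cyl (zword x y c (List.ofFn u ++ [a])))).toReal
              * Real.logb 2 ((ξ (cyl (zword x y c (List.ofFn u ++ [a])))).toReal)) := by
    calc _ = (∑ c : Option A, ∑ u : Fin j → A, ∑ a : A,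
            (ξ (cyl (zword x y c (List.ofFn u ++ [a])))).toReal
              * Real.logb 2 ((ξ (cyl (zword x y c (List.ofFn u)))).toReal))
          - (∑ c : Option A, ∑ u : Fin j → A, ∑ a : A,
            ((ξ (cyl (zword x y c (List.ofFn u ++ [a])))).toReal
              * Real.logb 2 ((ξ (cyl (zword x y c (List.ofFn u ++ [a])))).toReal))) := by
          rw [Finset.sum_congr rfl fun c (_ : c ∈ Finset.univ) =>
            Finset.sum_congr rfl fun u _ => hqsplit c u]
      _ = ∑ c : Option A, ∑ u : Fin j → A, ∑ a : A,
            ((ξ (cyl (zword x y c (List.ofFn u ++ [a])))).toReal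
                * Real.logb 2 ((ξ (cyl (zword x y c (List.ofFn u)))).toReal)
              - (ξ (cyl (zword x y c (List.ofFn u ++ [a])))).toReal
                * Real.logb 2 ((ξ (cyl (zword x y c (List.ofFn u ++ [a])))).toReal)) := by
          rw [← Finset.sum_sub_distrib]
          refine Finset.sum_congr rfl fun c _ => ?_
          rw [← Finset.sum_sub_distrib]
          exact Finset.sum_congr rfl fun u _ => (Finset.sum_sub_distrib _ _).symm
      _ = ∑ u : Fin j → A, ∑ c : Option A, ∑ a : A, _ := Finset.sum_comm
      _ = _ := Finset.sum_congr rfl fun u _ => Finset.sum_comm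
  have hLmu : (∑ w1 : A, ∑ u : Fin j → A,
        ((μ (cyl (w1 :: List.ofFn u))).toReal
          * Real.logb 2 ((μ (cyl (w1 :: List.ofFn u))).toReal)))
      - (∑ w1 : A, ∑ u : Fin j → A, ∑ a : A,
          ((μ (cyl (w1 :: (List.ofFn u ++ [a])))).toReal
            * Real.logb 2 ((μ (cyl (w1 :: (List.ofFn u ++ [a])))).toReal)))
      = ∑ u : Fin j → A, ∑ a : A, ∑ w1 : A,
          ((μ (cyl (w1 :: (List.ofFn u ++ [a])))).toReal
              * Real.logb 2 ((μ (cyl (w1 :: List.ofFn u))).toReal)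
            - (μ (cyl (w1 :: (List.ofFn u ++ [a])))).toReal
              * Real.logb 2 ((μ (cyl (w1 :: (List.ofFn u ++ [a])))).toReal)) := by
    calc _ = (∑ w1 : A, ∑ u : Fin j → A, ∑ a : A,
            (μ (cyl (w1 :: (List.ofFn u ++ [a])))).toReal
              * Real.logb 2 ((μ (cyl (w1 :: List.ofFn u))).toReal))
          - (∑ w1 : A, ∑ u : Fin j → A, ∑ a : A,
            ((μ (cyl (w1 :: (List.ofFn u ++ [a])))).toReal
              * Real.logb 2 ((μ (cyl (w1 :: (List.ofFn u ++ [a])))).toReal))) := by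
          rw [Finset.sum_congr rfl fun w1 (_ : w1 ∈ Finset.univ) =>
            Finset.sum_congr rfl fun u _ => hpsplit w1 u]
      _ = ∑ w1 : A, ∑ u : Fin j → A, ∑ a : A,
            ((μ (cyl (w1 :: (List.ofFn u ++ [a])))).toReal
                * Real.logb 2 ((μ (cyl (w1 :: List.ofFn u))).toReal)
              - (μ (cyl (w1 :: (List.ofFn u ++ [a])))).toReal
                * Real.logb 2 ((μ (cyl (w1 :: (List.ofFn u ++ [a])))).toReal)) := by
          rw [← Finset.sum_sub_distrib]
          refine Finset.sum_congr rfl fun w1 _ => ?_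
          rw [← Finset.sum_sub_distrib]
          exact Finset.sum_congr rfl fun u _ => (Finset.sum_sub_distrib _ _).symm
      _ = ∑ u : Fin j → A, ∑ w1 : A, ∑ a : A, _ := Finset.sum_comm
      _ = _ := Finset.sum_congr rfl fun u _ => Finset.sum_comm
  rw [hLxi, hLmu]
  refine Finset.sum_le_sum fun u _ => Finset.sum_le_sum fun a _ => ?_
  -- group the c-sum according to the fibers of psi
  have hfib := Finset.sum_fiberwise_eq_sum_filter (Finset.univ : Finset (Option A))
    (Finset.univ : Finset A) (psi y)
    (fun c => ((ξ (cyl (zword x y c (List.ofFn u ++ [a])))).toReal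
        * Real.logb 2 ((ξ (cyl (zword x y c (List.ofFn u)))).toReal)
      - (ξ (cyl (zword x y c (List.ofFn u ++ [a])))).toReal
        * Real.logb 2 ((ξ (cyl (zword x y c (List.ofFn u ++ [a])))).toReal)))
  rw [Finset.filter_true_of_mem (fun c _ => Finset.mem_univ (psi y c))] at hfib
  rw [← hfib]
  refine Finset.sum_le_sum fun w1 _ => ?_
  have hA := qsum x y μ ξ hRμ hμshift w1 (List.ofFn u ++ [a])
  have hB := qsum x y μ ξ hRμ hμshift w1 (List.ofFn u)
  have hineq := logb_sum_ineq (Finset.univ.filter (fun c : Option A => psi y c = w1))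
    (fun c => (ξ (cyl (zword x y c (List.ofFn u ++ [a])))).toReal)
    (fun c => (ξ (cyl (zword x y c (List.ofFn u)))).toReal)
    (fun c _ => ENNReal.toReal_nonneg)
    (fun c _ => by
      show (ξ (cyl (zword x y c (List.ofFn u ++ [a])))).toReal
          ≤ (ξ (cyl (zword x y c (List.ofFn u)))).toReal
      rw [zword_append]
      exact cyl_mono ξ _ _)
  rw [hA, hB] at hineq
  exact hineq
end Final
end NSPS


/-- `h₁(ℛμ) ≤ h₁(μ)` and, more generally, `h_k(ℛμ) ≤ h_k(μ)` for every
`k ≥ 1`, with `h_k = H_{k+1} − H_k`. -/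
theorem stmt_16 {A : Type*} [Fintype A] [DecidableEq A] [MeasurableSpace A]
    [MeasurableSingletonClass A] (x y : A)
    (μ : Measure (ℤ → A)) [IsProbabilityMeasure μ] (hμ : Ergodic shift μ)
    (ξ : Measure (ℤ → Option A)) [IsProbabilityMeasure ξ] (hξ : Ergodic shift ξ)
    (hRμ : ∀ s : List (Option A), s ≠ [] →
      ∀ᵐ w ∂μ, Tendsto
        (fun n : ℕ => (occ s (pairSubstR x y (wordOf w n)) : ℝ) / (n : ℝ))
        atTop (𝓝 ((ξ (cyl s)).toReal))) :
    (blockH ξ 2 - blockH ξ 1 ≤ blockH μ 2 - blockH μ 1) ∧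
    ∀ k : ℕ, 1 ≤ k →
      blockH ξ (k + 1) - blockH ξ k ≤ blockH μ (k + 1) - blockH μ k := by
  constructor
  · exact NSPS.hk_le x y μ ξ hRμ hμ.toMeasurePreserving 0
  · intro k hk
    obtain ⟨j, rfl⟩ : ∃ j, k = j + 1 := ⟨k - 1, by omega⟩
    exact NSPS.hk_le x y μ ξ hRμ hμ.toMeasurePreserving j
end
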